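/- arXiv:2409.02099 — 7 statements merged into one kernel-verified Lean document; each statement's English description precedes it below -/
import Mathlib

section
/- In AG(2,q) (q a prime power), any blocking set (a set of points meeting every line) has size at least 2q - 1. -/
open MvPolynomial Finset

/-- A polynomial in two variables over a finite field whose total degree is less than
`2*(q-1)` has evaluation sum zero. -/
lemma aux_sum_eval_eq_zero {K : Type*} [Field K] [Fintype K] [DecidableEq K]
    (P : MvPolynomial (Fin 2) K) (hdeg : P.totalDegree < 2 * (Fintype.card K - 1)) :
    ∑ v : Fin 2 → K, MvPolynomial.eval v P = 0 := by
  have hev : ∀ v : Fin 2 → K, MvPolynomial.eval v P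
      = ∑ d ∈ P.support, P.coeff d * ∏ i, v i ^ d i := fun v => eval_eq' v P
  simp_rw [hev]
  rw [Finset.sum_comm]
  apply Finset.sum_eq_zero
  intro d hd
  rw [← Finset.mul_sum]
  have hsum : ∑ v : Fin 2 → K, ∏ i, v i ^ d i = (∑ a : K, a ^ d 0) * (∑ b : K, b ^ d 1) := by
    rw [← ((finTwoArrowEquiv K).symm.sum_comp (fun v : Fin 2 → K => ∏ i, v i ^ d i))]
    rw [Finset.sum_mul_sum, Fintype.sum_prod_type]
    apply Finset.sum_congr rfl; intro a _
    apply Finset.sum_congr rfl; intro b _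
    simp [finTwoArrowEquiv, Fin.prod_univ_two]
  rw [hsum]
  have hdsum : d 0 + d 1 ≤ P.totalDegree := by
    have := MvPolynomial.le_totalDegree hd
    rwa [Finsupp.sum_fintype, Fin.sum_univ_two] at this
    intro; rfl
  have : d 0 < Fintype.card K - 1 ∨ d 1 < Fintype.card K - 1 := by omega
  rcases this with h | h
  · rw [FiniteField.sum_pow_lt_card_sub_one K _ h, zero_mul, mul_zero]
  · rw [FiniteField.sum_pow_lt_card_sub_one K _ h, mul_zero, mul_zero]

/-- Jamison / Brouwer–Schrijver: a blocking set in `AG(2,q)`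
has size at least `2q - 1`. -/
theorem stmt1 {K : Type*} [Field K] [Fintype K] [DecidableEq K]
    (q : ℕ) (hq : q = Fintype.card K)
    (B : Finset (K × K))
    (hB : ∀ a d : K × K, d ≠ 0 → ∃ p ∈ B, ∃ t : K, p = a + t • d) :
    2 * q - 1 ≤ B.card := by
  have hq2 : 2 ≤ q := hq ▸ Fintype.one_lt_card
  -- pick a base point of B and translate it to the origin
  obtain ⟨b₀, hb₀, -⟩ := hB 0 (1, 0) (by simp [Prod.ext_iff])
  set B' : Finset (K × K) := (B.image (fun p => p - b₀)).erase 0 with hB'def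
  -- the translated punctured set blocks all lines missing the origin
  have hblock : ∀ a b : K, ¬(a = 0 ∧ b = 0) → ∃ p ∈ B', a * p.1 + b * p.2 = 1 := by
    intro a b hab
    set c : K := 1 + (a * b₀.1 + b * b₀.2) with hc
    have key : ∃ p ∈ B, a * p.1 + b * p.2 = c := by
      rcases (by tauto : a ≠ 0 ∨ b ≠ 0) with ha | hb
      · obtain ⟨p, hp, t, hpt⟩ := hB (a⁻¹ * c, 0) (-b, a)
          (by simp [Prod.ext_iff]; intro _; exact ha)
        refine ⟨p, hp, ?_⟩
        have h1 : p.1 = a⁻¹ * c + t * (-b) := by rw [hpt]; rfl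
        have h2 : p.2 = 0 + t * a := by rw [hpt]; rfl
        rw [h1, h2]; field_simp; ring
      · obtain ⟨p, hp, t, hpt⟩ := hB (0, b⁻¹ * c) (-b, a)
          (by simp [Prod.ext_iff]; intro h; exact absurd h hb)
        refine ⟨p, hp, ?_⟩
        have h1 : p.1 = 0 + t * (-b) := by rw [hpt]; rfl
        have h2 : p.2 = b⁻¹ * c + t * a := by rw [hpt]; rfl
        rw [h1, h2]; field_simp; ring
    obtain ⟨p, hp, hpc⟩ := key
    have hval : a * (p - b₀).1 + b * (p - b₀).2 = 1 := by
      have h1 : (p - b₀).1 = p.1 - b₀.1 := rfl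
      have h2 : (p - b₀).2 = p.2 - b₀.2 := rfl
      rw [h1, h2, hc] at *
      linear_combination hpc
    refine ⟨p - b₀, Finset.mem_erase.2 ⟨?_, Finset.mem_image.2 ⟨p, hp, rfl⟩⟩, hval⟩
    intro h0
    rw [h0] at hval
    simp at hval
  -- the Brouwer–Schrijver polynomial
  set P : MvPolynomial (Fin 2) K :=
    ∏ p ∈ B', (C p.1 * X 0 + C p.2 * X 1 - 1) with hPdef
  have hdegP : P.totalDegree ≤ B'.card := by
    refine le_trans (totalDegree_finset_prod _ _) ?_
    calc ∑ p ∈ B', (C p.1 * X 0 + C p.2 * X 1 - 1 : MvPolynomial (Fin 2) K).totalDegree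
        ≤ ∑ _p ∈ B', 1 := by
          refine Finset.sum_le_sum fun p _ => ?_
          refine le_trans (totalDegree_sub _ _) (max_le ?_ (by simp))
          refine le_trans (totalDegree_add _ _) (max_le ?_ ?_) <;>
          · refine le_trans (totalDegree_mul _ _) ?_
            simp [totalDegree_X]
      _ = B'.card := by simp
  have hevalP : ∀ v : Fin 2 → K, MvPolynomial.eval v P
      = ∏ p ∈ B', (p.1 * v 0 + p.2 * v 1 - 1) := by
    intro v
    rw [hPdef, eval_prod]
    exact Finset.prod_congr rfl fun p _ => by simp
  have h0e : MvPolynomial.eval (fun _ => (0 : K)) P = (-1) ^ B'.card := by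
    rw [hevalP]
    simp
  have hne : ∀ v : Fin 2 → K, v ≠ (fun _ => 0) → MvPolynomial.eval v P = 0 := by
    intro v hv
    have hv' : ¬(v 0 = 0 ∧ v 1 = 0) := by
      rintro ⟨h0', h1'⟩
      exact hv (funext fun i => by fin_cases i <;> assumption)
    obtain ⟨p, hpB, hp1⟩ := hblock (v 0) (v 1) hv'
    rw [hevalP]
    refine Finset.prod_eq_zero hpB ?_
    have : p.1 * v 0 + p.2 * v 1 = 1 := by linear_combination hp1
    rw [this, sub_self]
  have hsum : ∑ v : Fin 2 → K, MvPolynomial.eval v P = (-1) ^ B'.card := by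
    rw [Fintype.sum_eq_single (fun _ => (0 : K)) hne, h0e]
  have hcard : 2 * (q - 1) ≤ B'.card := by
    by_contra hlt
    push_neg at hlt
    have hdlt : P.totalDegree < 2 * (Fintype.card K - 1) := by omega
    have := aux_sum_eval_eq_zero P hdlt
    rw [hsum] at this
    exact pow_ne_zero _ (neg_ne_zero.2 one_ne_zero) this
  have h0mem : (0 : K × K) ∈ B.image (fun p => p - b₀) :=
    Finset.mem_image.2 ⟨b₀, hb₀, sub_self b₀⟩
  have hpos : 1 ≤ (B.image (fun p => p - b₀)).card :=
    Finset.card_pos.2 ⟨0, h0mem⟩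
  have hc1 : B'.card = (B.image (fun p => p - b₀)).card - 1 := by
    rw [hB'def, Finset.card_erase_of_mem h0mem]
  have hc2 : (B.image (fun p => p - b₀)).card ≤ B.card := Finset.card_image_le
  omega
end

section
/- Let F be a (k,4)-arc in PG(2,5) (every line meets F in at most 4 points, counted with multiplicity) such that all lines meeting F in exactly 4 points pass through a common point. Then k ≤ 12. -/
open Finset
open scoped Classical

namespace Stmt2Aux

lemma filter_card_one {α : Type*} [Fintype α] (P : α → Prop) [DecidablePred P]
    (h : ∃! a, P a) : (univ.filter P).card = 1 := by
  obtain ⟨a, ha, hu⟩ := h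
  rw [Finset.card_eq_one]
  refine ⟨a, ?_⟩
  ext b
  simp only [mem_filter, mem_univ, true_and, mem_singleton]
  exact ⟨fun hb => hu b hb, fun hb => hb ▸ ha⟩

lemma get_unique {α : Type*} (A : Finset α) (P : α → Prop) [DecidablePred P]
    (h : (A.filter P).card = 1) : ∃ T ∈ A, P T ∧ ∀ M ∈ A, P M → M = T := by
  obtain ⟨T, hT⟩ := Finset.card_eq_one.mp h
  have hTm : T ∈ A.filter P := hT ▸ Finset.mem_singleton_self T
  simp only [mem_filter] at hTm
  refine ⟨T, hTm.1, hTm.2, fun M hM hPM => ?_⟩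
  have : M ∈ A.filter P := mem_filter.mpr ⟨hM, hPM⟩
  rw [hT, mem_singleton] at this; exact this

lemma helper1 {α : Type*} [DecidableEq α] (A : Finset α) (f : α → ℕ) (a : α) (ha : a ∈ A)
    (c1 c : ℕ) (h1 : f a ≤ c1) (h : ∀ b ∈ A, b ≠ a → f b ≤ c) :
    ∑ b ∈ A, f b ≤ c1 + (A.card - 1) * c := by
  rw [← Finset.add_sum_erase A f ha]
  have : ∑ b ∈ A.erase a, f b ≤ (A.card - 1) * c := by
    calc ∑ b ∈ A.erase a, f b ≤ ∑ _b ∈ A.erase a, c :=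
      Finset.sum_le_sum (fun b hb => h b (Finset.mem_of_mem_erase hb) (Finset.ne_of_mem_erase hb))
    _ = (A.card - 1) * c := by rw [Finset.sum_const, Finset.card_erase_of_mem ha, smul_eq_mul]
  omega

lemma helper2 {α : Type*} [DecidableEq α] (A : Finset α) (f : α → ℕ) (a b : α) (ha : a ∈ A)
    (hb : b ∈ A) (hab : a ≠ b) (c1 c2 c : ℕ) (h1 : f a ≤ c1) (h2 : f b ≤ c2)
    (h : ∀ d ∈ A, d ≠ a → d ≠ b → f d ≤ c) :
    ∑ d ∈ A, f d ≤ c1 + c2 + (A.card - 2) * c := by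
  rw [← Finset.add_sum_erase A f ha]
  have hb' : b ∈ A.erase a := Finset.mem_erase.mpr ⟨hab.symm, hb⟩
  rw [← Finset.add_sum_erase _ f hb']
  have : ∑ d ∈ (A.erase a).erase b, f d ≤ (A.card - 2) * c := by
    calc ∑ d ∈ (A.erase a).erase b, f d ≤ ∑ _d ∈ (A.erase a).erase b, c := by
          refine Finset.sum_le_sum (fun d hd => ?_)
          have hd1 := Finset.ne_of_mem_erase hd
          have hd2 := Finset.mem_of_mem_erase hd
          exact h d (Finset.mem_of_mem_erase hd2) (Finset.ne_of_mem_erase hd2) hd1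
    _ = (A.card - 2) * c := by
          rw [Finset.sum_const, Finset.card_erase_of_mem hb', Finset.card_erase_of_mem ha,
            smul_eq_mul]
          have : #A - 1 - 1 = #A - 2 := by omega
          rw [this]
  omega


lemma sum_indicator_card {α : Type*} (A : Finset α) (P : α → Prop) [DecidablePred P] :
    ∑ a ∈ A, (if P a then 1 else 0) = (A.filter P).card := by
  rw [Finset.sum_ite, Finset.sum_const, Finset.sum_const, smul_eq_mul, smul_eq_mul,
    mul_one, mul_zero, add_zero]

lemma sum_zero_out {α : Type} [DecidableEq α] (A : Finset α) (S : α → ℕ) (w : α)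
    (hw : S w = 1) :
    (∑ p ∈ A, (if p = w then 0 else S p)) + (if w ∈ A then 1 else 0) = ∑ p ∈ A, S p := by
  by_cases h : w ∈ A
  · rw [if_pos h, ← Finset.add_sum_erase A S h, ← Finset.add_sum_erase A _ h, if_pos rfl, hw]
    have : ∑ p ∈ A.erase w, (if p = w then 0 else S p) = ∑ p ∈ A.erase w, S p :=
      Finset.sum_congr rfl (fun p hp => if_neg (Finset.ne_of_mem_erase hp))
    omega
  · rw [if_neg h, add_zero]
    exact Finset.sum_congr rfl (fun p hp => if_neg (fun e => h (by rw [← e]; exact hp)))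


section Plane
variable {Point Line : Type} [Fintype Point] [Fintype Line]
variable (mem : Point → Line → Prop) [∀ p L, Decidable (mem p L)]

lemma flag (f : Point → ℕ) (g : Line → ℕ) :
    ∑ L, g L * ∑ p ∈ univ.filter (fun p => mem p L), f p
      = ∑ p, f p * ∑ L ∈ univ.filter (fun L => mem p L), g L := by
  simp only [sum_filter, mul_sum, sum_mul]
  rw [Finset.sum_comm]
  refine Finset.sum_congr rfl (fun p _ => Finset.sum_congr rfl (fun L _ => ?_))
  by_cases h : mem p L <;> simp [h, mul_comm]

lemma filter_card_one' {α : Type*} [Fintype α] (P : α → Prop) [DecidablePred P]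
    (h : ∃! a, P a) : (univ.filter P).card = 1 := by
  obtain ⟨a, ha, hu⟩ := h
  rw [Finset.card_eq_one]
  refine ⟨a, ?_⟩
  ext b
  simp only [mem_filter, mem_univ, true_and, mem_singleton]
  exact ⟨fun hb => hu b hb, fun hb => hb ▸ ha⟩

lemma boole_card {α : Type*} [Fintype α] (P Q : α → Prop) [DecidablePred P] [DecidablePred Q] :
    ∑ a ∈ univ.filter P, (if Q a then 1 else 0) = (univ.filter (fun a => P a ∧ Q a)).card := by
  classical
  rw [Finset.sum_boole]
  rw [Finset.filter_filter]
  norm_num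

lemma lns_inter (hpoint : ∀ p, (univ.filter (fun L => mem p L)).card = 6)
    (hjoin : ∀ p q : Point, p ≠ q → ∃! L, mem p L ∧ mem q L) (p p0 : Point) :
    ∑ L ∈ univ.filter (fun L => mem p L), (if mem p0 L then 1 else 0)
      = if p = p0 then 6 else 1 := by
  rw [boole_card]
  by_cases h : p = p0
  · subst h; rw [if_pos rfl]
    simp only [and_self]
    exact hpoint p
  · rw [if_neg h]
    exact filter_card_one' _ (hjoin p p0 h)

lemma pts_inter (hline : ∀ L, (univ.filter (fun p => mem p L)).card = 6)
    (hmeet : ∀ L M : Line, L ≠ M → ∃! p, mem p L ∧ mem p M) (L M : Line) :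
    ∑ p ∈ univ.filter (fun p => mem p L), (if mem p M then 1 else 0)
      = if L = M then 6 else 1 := by
  rw [boole_card]
  by_cases h : L = M
  · subst h; rw [if_pos rfl]
    simp only [and_self]
    exact hline L
  · rw [if_neg h]
    exact filter_card_one' _ (hmeet L M h)

lemma pencil (hpoint : ∀ p, (univ.filter (fun L => mem p L)).card = 6)
    (hjoin : ∀ p q : Point, p ≠ q → ∃! L, mem p L ∧ mem q L) (f : Point → ℕ) (p0 : Point) :
    ∑ L ∈ univ.filter (fun L => mem p0 L), ∑ p ∈ univ.filter (fun p => mem p L), f p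
      = (∑ p, f p) + 5 * f p0 := by
  have h1 : ∑ L ∈ univ.filter (fun L => mem p0 L), ∑ p ∈ univ.filter (fun p => mem p L), f p
      = ∑ L, (if mem p0 L then 1 else 0) * ∑ p ∈ univ.filter (fun p => mem p L), f p := by
    rw [Finset.sum_filter]
    refine Finset.sum_congr rfl (fun L _ => ?_)
    by_cases h : mem p0 L <;> simp [h]
  rw [h1, flag]
  have h2 : ∀ p : Point, f p * ∑ L ∈ univ.filter (fun L => mem p L), (if mem p0 L then 1 else 0)
      = f p + (if p = p0 then 5 * f p else 0) := by
    intro p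
    rw [lns_inter mem hpoint hjoin p p0]
    by_cases h : p = p0 <;> simp [h] <;> ring
  rw [Finset.sum_congr rfl (fun p _ => h2 p), Finset.sum_add_distrib, Finset.sum_ite_eq' univ p0]
  simp

lemma line_flag (hline : ∀ L, (univ.filter (fun p => mem p L)).card = 6)
    (hmeet : ∀ L M : Line, L ≠ M → ∃! p, mem p L ∧ mem p M) (g : Line → ℕ) (L0 : Line) :
    ∑ p ∈ univ.filter (fun p => mem p L0), ∑ L ∈ univ.filter (fun L => mem p L), g L
      = (∑ L, g L) + 5 * g L0 := by
  have h1 : ∑ p ∈ univ.filter (fun p => mem p L0), ∑ L ∈ univ.filter (fun L => mem p L), g L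
      = ∑ p, (if mem p L0 then 1 else 0) * ∑ L ∈ univ.filter (fun L => mem p L), g L := by
    rw [Finset.sum_filter]
    refine Finset.sum_congr rfl (fun p _ => ?_)
    by_cases h : mem p L0 <;> simp [h]
  have h1' : ∀ p : Point, (if mem p L0 then 1 else 0) * ∑ L ∈ univ.filter (fun L => mem p L), g L
      = (fun q => if mem q L0 then (1:ℕ) else 0) p * ∑ L ∈ univ.filter (fun L => mem p L), g L :=
    fun p => rfl
  rw [h1, ← flag mem (fun q => if mem q L0 then (1:ℕ) else 0) g]
  have h2 : ∀ L : Line, g L * ∑ p ∈ univ.filter (fun p => mem p L), (if mem p L0 then (1:ℕ) else 0)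
      = g L + (if L = L0 then 5 * g L else 0) := by
    intro L
    rw [pts_inter mem hline hmeet L L0]
    by_cases h : L = L0 <;> simp [h] <;> ring
  rw [Finset.sum_congr rfl (fun L _ => h2 L), Finset.sum_add_distrib, Finset.sum_ite_eq' univ L0]
  simp

lemma sq_count (hline : ∀ L, (univ.filter (fun p => mem p L)).card = 6)
    (hmeet : ∀ L M : Line, L ≠ M → ∃! p, mem p L ∧ mem p M) (g : Line → ℕ)
    (hg : ∀ L, g L ≤ 1) :
    ∑ p, (∑ L ∈ univ.filter (fun L => mem p L), g L) ^ 2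
      = (∑ L, g L) ^ 2 + 5 * ∑ L, g L := by
  have key : ∀ p : Point, (∑ L ∈ univ.filter (fun L => mem p L), g L) ^ 2
      = (fun q => ∑ L ∈ univ.filter (fun L => mem q L), g L) p
        * ∑ L ∈ univ.filter (fun L => mem p L), g L := by
    intro p; rw [sq]
  calc ∑ p, (∑ L ∈ univ.filter (fun L => mem p L), g L) ^ 2
      = ∑ p, (fun q => ∑ L ∈ univ.filter (fun L => mem q L), g L) p
          * ∑ L ∈ univ.filter (fun L => mem p L), g L := by
        exact Finset.sum_congr rfl (fun p _ => key p)
    _ = ∑ L, g L * ∑ p ∈ univ.filter (fun p => mem p L),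
          (fun q => ∑ M ∈ univ.filter (fun M => mem q M), g M) p := by
        rw [flag]
    _ = ∑ L, g L * ((∑ M, g M) + 5 * g L) := by
        refine Finset.sum_congr rfl (fun L _ => ?_)
        rw [line_flag mem hline hmeet g L]
    _ = (∑ L, g L) ^ 2 + 5 * ∑ L, g L := by
        have e2 : (∑ L, g L * g L) = ∑ L, g L := by
          refine Finset.sum_congr rfl (fun L _ => ?_)
          have h := hg L
          have h2 : g L = 0 ∨ g L = 1 := by omega
          rcases h2 with h1 | h1 <;> rw [h1]
        have e1 : (∑ L, g L * ((∑ M, g M) + 5 * g L))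
            = ∑ L, (g L * (∑ M, g M) + 5 * (g L * g L)) :=
          Finset.sum_congr rfl (fun L _ => by ring)
        rw [e1, Finset.sum_add_distrib]
        rw [← Finset.sum_mul]
        rw [← Finset.mul_sum]
        rw [e2, sq]

lemma no12 (hline : ∀ L, (univ.filter (fun p => mem p L)).card = 6)
    (hpoint : ∀ p, (univ.filter (fun L => mem p L)).card = 6)
    (hjoin : ∀ p q : Point, p ≠ q → ∃! L, mem p L ∧ mem q L)
    (hmeet : ∀ L M : Line, L ≠ M → ∃! p, mem p L ∧ mem p M)
    (S : Point → ℕ) (hS1 : ∀ p, S p ≤ 1) (hsum : ∑ p, S p = 12)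
    (h3 : ∀ L, ∑ p ∈ univ.filter (fun p => mem p L), S p ≤ 3) : False := by
  classical
  let v : Line → ℕ := fun L => ∑ p ∈ univ.filter (fun p => mem p L), S p
  have hv : ∀ L, v L = ∑ p ∈ univ.filter (fun p => mem p L), S p := fun L => rfl
  have h3v : ∀ L, v L ≤ 3 := fun L => h3 L
  have hp : ∀ p : Point, ∑ L ∈ univ.filter (fun L => mem p L), v L = 12 + 5 * S p := by
    intro p
    have := pencil mem hpoint hjoin S p
    rw [hsum] at this
    exact this
  have hmem : ∀ p L, mem p L → S p ≤ v L := by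
    intro p L h
    exact Finset.single_le_sum (f := S) (fun i _ => Nat.zero_le _)
      (Finset.mem_filter.mpr ⟨Finset.mem_univ p, h⟩)
  have hlow : ∀ p, S p = 1 → ∀ L, mem p L → 2 ≤ v L := by
    intro p hp1 L hL
    have hLmem : L ∈ univ.filter (fun M => mem p M) :=
      Finset.mem_filter.mpr ⟨Finset.mem_univ L, hL⟩
    have hb := helper1 (univ.filter (fun M => mem p M)) v L hLmem (v L) 3 le_rfl
      (fun M _ _ => h3v M)
    rw [hp p, hp1, hpoint p] at hb
    omega
  have notan : ∀ L, v L ≠ 1 := by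
    intro L hL1
    have hne : ∑ p ∈ univ.filter (fun p => mem p L), S p ≠ 0 := by
      rw [← hv L]; omega
    obtain ⟨p, hpmem, hp0⟩ := Finset.exists_ne_zero_of_sum_ne_zero hne
    have hpL : mem p L := (Finset.mem_filter.mp hpmem).2
    have hp1 : S p = 1 := by have := hS1 p; omega
    have := hlow p hp1 L hpL
    omega
  let g : Line → ℕ := fun L => if v L = 2 then 1 else 0
  have hgd : ∀ L, g L = if v L = 2 then 1 else 0 := fun L => rfl
  let t2 : Point → ℕ := fun p => ∑ L ∈ univ.filter (fun L => mem p L), g L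
  have ht2d : ∀ p, t2 p = ∑ L ∈ univ.filter (fun L => mem p L), g L := fun p => rfl
  have hg1 : ∀ L, g L ≤ 1 := by intro L; rw [hgd]; split <;> omega
  have ht2S : ∀ p, S p = 1 → t2 p = 1 := by
    intro p hp1
    have key : ∀ L ∈ univ.filter (fun L => mem p L), g L + v L = 3 := by
      intro L hLf
      have hL : mem p L := (Finset.mem_filter.mp hLf).2
      have h1 := hlow p hp1 L hL
      have h2 := h3v L
      rw [hgd]; split <;> omega
    have hsum18 : ∑ L ∈ univ.filter (fun L => mem p L), (g L + v L) = 18 := by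
      rw [Finset.sum_congr rfl key, Finset.sum_const, hpoint p, smul_eq_mul]
    rw [Finset.sum_add_distrib, hp p, hp1, ← ht2d p] at hsum18
    omega
  let n2 : ℕ := ∑ L, g L
  have hn2d : n2 = ∑ L, g L := rfl
  have hflagS : 2 * n2 = 12 := by
    have h1 : ∑ L, g L * v L = ∑ p, S p * t2 p := flag mem S g
    have h2 : ∑ L, g L * v L = ∑ L, 2 * g L := by
      refine Finset.sum_congr rfl (fun L _ => ?_)
      rw [hgd]; split
      · next h => rw [h]
      · ring
    have h3' : ∑ p, S p * t2 p = ∑ p, S p := by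
      refine Finset.sum_congr rfl (fun p _ => ?_)
      rcases Nat.le_one_iff_eq_zero_or_eq_one.mp (hS1 p) with h | h
      · rw [h]; ring
      · rw [h, ht2S p h]
    rw [h2, h3', hsum, ← Finset.mul_sum, ← hn2d] at h1
    omega
  have hn2v : n2 = 6 := by omega
  have m1 : ∑ p, t2 p = 36 := by
    have h1 := flag mem (fun _ => 1) g
    have h2 : ∑ L, g L * ∑ p ∈ univ.filter (fun p => mem p L), (1:ℕ) = ∑ L, 6 * g L := by
      refine Finset.sum_congr rfl (fun L _ => ?_)
      rw [Finset.sum_const, hline L, smul_eq_mul, mul_one]; ring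
    rw [h2, ← Finset.mul_sum, ← hn2d, hn2v] at h1
    have h3' : ∑ p : Point, (fun _ => (1:ℕ)) p * ∑ L ∈ univ.filter (fun L => mem p L), g L
        = ∑ p, t2 p := by
      refine Finset.sum_congr rfl (fun p _ => ?_)
      rw [← ht2d p]; ring
    rw [h3'] at h1
    omega
  have m2 : ∑ p, (t2 p) ^ 2 = 66 := by
    have hh := sq_count mem hline hmeet g hg1
    rw [← hn2d, hn2v] at hh
    calc ∑ p, (t2 p) ^ 2
        = ∑ p, (∑ L ∈ univ.filter (fun L => mem p L), g L) ^ 2 :=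
          Finset.sum_congr rfl (fun p _ => by rw [ht2d p])
      _ = 66 := by rw [hh]; norm_num
  have key : ∀ p : Point, 3 * t2 p ≤ (t2 p) ^ 2 + 2 * S p := by
    intro p
    rcases Nat.le_one_iff_eq_zero_or_eq_one.mp (hS1 p) with h | h
    · have hsplit : ∀ L ∈ univ.filter (fun L => mem p L),
          v L = 2 * g L + 3 * (if v L = 3 then 1 else 0) := by
        intro L hLf
        have h2 := h3v L
        have h1 := notan L
        rw [hgd]
        by_cases e2 : v L = 2
        · rw [if_pos e2, if_neg (by omega), e2]
        · rw [if_neg e2]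
          by_cases e3 : v L = 3
          · rw [if_pos e3, e3]
          · rw [if_neg e3]; omega
      have hsum12 : 2 * t2 p + 3 * (∑ L ∈ univ.filter (fun L => mem p L),
          (if v L = 3 then 1 else 0)) = 12 := by
        have hpp := hp p
        rw [Finset.sum_congr rfl hsplit, Finset.sum_add_distrib, ← Finset.mul_sum,
          ← Finset.mul_sum, ← ht2d p, h] at hpp
        omega
      have hcase : t2 p = 0 ∨ 3 ≤ t2 p := by omega
      rcases hcase with h0 | h0
      · rw [h0, h]; omega
      · have hmul : 3 * t2 p ≤ t2 p * t2 p := Nat.mul_le_mul_right _ h0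
        rw [sq]; omega
    · rw [ht2S p h, h]; norm_num
  have hfin := Finset.sum_le_sum (s := univ) (fun p (_ : p ∈ univ) => key p)
  rw [Finset.sum_add_distrib, ← Finset.mul_sum, ← Finset.mul_sum, m1, m2, hsum] at hfin
  omega


lemma a2case (hline : ∀ L, (univ.filter (fun p => mem p L)).card = 6)
    (hpoint : ∀ p, (univ.filter (fun L => mem p L)).card = 6)
    (hjoin : ∀ p q : Point, p ≠ q → ∃! L, mem p L ∧ mem q L)
    (hmeet : ∀ L M : Line, L ≠ M → ∃! p, mem p L ∧ mem p M)
    (x : Point) (S : Point → ℕ) (hS1 : ∀ p, S p ≤ 1) (hSx : S x = 0)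
    (hsum : ∑ p, S p = 11)
    (hx2 : ∀ L, mem x L → ∑ p ∈ univ.filter (fun p => mem p L), S p ≤ 2)
    (h3 : ∀ L, ¬ mem x L → ∑ p ∈ univ.filter (fun p => mem p L), S p ≤ 3) : False := by
  classical
  let v : Line → ℕ := fun L => ∑ p ∈ univ.filter (fun p => mem p L), S p
  have hv : ∀ L, v L = ∑ p ∈ univ.filter (fun p => mem p L), S p := fun L => rfl
  have hvle3 : ∀ L, v L ≤ 3 := by
    intro L; by_cases h : mem x L
    · rw [hv L]; have := hx2 L h; omega
    · exact h3 L h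
  have hp : ∀ p : Point, ∑ L ∈ univ.filter (fun L => mem p L), v L = 11 + 5 * S p := by
    intro p
    have := pencil mem hpoint hjoin S p
    rw [hsum] at this
    exact this
  have hmem : ∀ p L, mem p L → S p ≤ v L := by
    intro p L h
    exact Finset.single_le_sum (f := S) (fun i _ => Nat.zero_le _)
      (Finset.mem_filter.mpr ⟨Finset.mem_univ p, h⟩)
  -- support of a line with v L ≥ 1
  have hsupp : ∀ L, v L ≠ 0 → ∃ y, mem y L ∧ S y = 1 := by
    intro L hL
    obtain ⟨p, hpmem, hp0⟩ := Finset.exists_ne_zero_of_sum_ne_zero (by rw [← hv L]; exact hL)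
    exact ⟨p, (Finset.mem_filter.mp hpmem).2, by have := hS1 p; omega⟩
  -- lines through x have v ≥ 1
  have hxlow : ∀ L, mem x L → 1 ≤ v L := by
    intro L hL
    have hLmem : L ∈ univ.filter (fun M => mem x M) :=
      Finset.mem_filter.mpr ⟨Finset.mem_univ L, hL⟩
    have hb := helper1 (univ.filter (fun M => mem x M)) v L hLmem (v L) 2 le_rfl
      (fun M hM _ => hx2 M (Finset.mem_filter.mp hM).2)
    rw [hp x, hSx, hpoint x] at hb
    omega
  -- exactly one line through x with v = 1  (the tangent T)
  have ht1 : ((univ.filter (fun L => mem x L)).filter (fun L => v L = 1)).card = 1 := by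
    have key : ∀ L ∈ univ.filter (fun L => mem x L), (if v L = 1 then 1 else 0) + v L = 2 := by
      intro L hLf
      have hL : mem x L := (Finset.mem_filter.mp hLf).2
      have h1 := hxlow L hL
      have h2 := hx2 L hL
      rw [← hv L] at h2
      split <;> omega
    have hs : ∑ L ∈ univ.filter (fun L => mem x L), ((if v L = 1 then 1 else 0) + v L) = 12 := by
      rw [Finset.sum_congr rfl key, Finset.sum_const, hpoint x, smul_eq_mul]
    rw [Finset.sum_add_distrib, hp x, hSx, sum_indicator_card] at hs
    omega
  obtain ⟨T, hTmem, hTv, hTuniq⟩ := get_unique _ _ ht1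
  have hxT : mem x T := (Finset.mem_filter.mp hTmem).2
  have hx2' : ∀ M, mem x M → M ≠ T → v M = 2 := by
    intro M hM hMT
    have h1 := hxlow M hM
    have h2 := hx2 M hM
    rw [← hv M] at h2
    by_cases e : v M = 1
    · exact absurd (hTuniq M (Finset.mem_filter.mpr ⟨Finset.mem_univ M, hM⟩) e) hMT
    · omega
  -- all tangents equal T
  have htan : ∀ L, v L = 1 → L = T := by
    intro L hL1
    by_cases hxL : mem x L
    · exact hTuniq L (Finset.mem_filter.mpr ⟨Finset.mem_univ L, hxL⟩) hL1
    · exfalso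
      obtain ⟨y, hyL, hy1⟩ := hsupp L (by omega)
      have hyx : x ≠ y := by intro h; rw [← h] at hy1; omega
      obtain ⟨L0, ⟨hxL0, hyL0⟩, _⟩ := hjoin x y hyx
      have hL0L : L0 ≠ L := by intro h; rw [h] at hxL0; exact hxL hxL0
      have hL0mem : L0 ∈ univ.filter (fun M => mem y M) :=
        Finset.mem_filter.mpr ⟨Finset.mem_univ L0, hyL0⟩
      have hLmem : L ∈ univ.filter (fun M => mem y M) :=
        Finset.mem_filter.mpr ⟨Finset.mem_univ L, hyL⟩
      have hb := helper2 (univ.filter (fun M => mem y M)) v L0 L hL0mem hLmem hL0L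
        2 1 3 (by have := hx2 L0 hxL0; rw [← hv L0] at this; exact this) (le_of_eq hL1)
        (fun M _ _ _ => hvle3 M)
      rw [hp y, hy1, hpoint y] at hb
      omega
  -- the tangent point z
  obtain ⟨z, hzT, hz1⟩ := hsupp T (by omega)
  have hzx : z ≠ x := by intro h; rw [h] at hz1; omega
  have huniq : ∀ p, mem p T → S p = 1 → p = z := by
    intro p hpT hp1
    by_contra hpz
    have hsub : ({z, p} : Finset Point) ⊆ univ.filter (fun q => mem q T) := by
      intro q hq
      rw [Finset.mem_insert, Finset.mem_singleton] at hq
      rcases hq with h | h <;> subst h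
      · exact Finset.mem_filter.mpr ⟨Finset.mem_univ _, hzT⟩
      · exact Finset.mem_filter.mpr ⟨Finset.mem_univ _, hpT⟩
    have : ∑ q ∈ ({z, p} : Finset Point), S q ≤ v T :=
      Finset.sum_le_sum_of_subset hsub
    rw [Finset.sum_pair (fun h => hpz h.symm)] at this
    omega
  -- count of 3-secants and 2-secants through points of the support
  let g3 : Line → ℕ := fun L => if v L = 3 then 1 else 0
  have hg3d : ∀ L, g3 L = if v L = 3 then 1 else 0 := fun L => rfl
  let t3 : Point → ℕ := fun p => ∑ L ∈ univ.filter (fun L => mem p L), g3 L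
  have ht3d : ∀ p, t3 p = ∑ L ∈ univ.filter (fun L => mem p L), g3 L := fun p => rfl
  -- t3 = 4 on support points other than z
  have hB : ∀ y, S y = 1 → y ≠ z → t3 y = 4 := by
    intro y hy1 hyz
    have hyx : x ≠ y := by intro h; rw [← h] at hy1; omega
    obtain ⟨L0, ⟨hxL0, hyL0⟩, _⟩ := hjoin x y hyx
    have hL0mem : L0 ∈ univ.filter (fun M => mem y M) :=
      Finset.mem_filter.mpr ⟨Finset.mem_univ L0, hyL0⟩
    have hvL0 : v L0 = 2 := by
      refine hx2' L0 hxL0 ?_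
      intro h
      rw [h] at hyL0
      exact hyz (huniq y hyL0 hy1)
    have hlow2 : ∀ L ∈ univ.filter (fun M => mem y M), 2 ≤ v L := by
      intro L hLf
      by_cases hLL0 : L = L0
      · rw [hLL0, hvL0]
      · have hb := helper2 (univ.filter (fun M => mem y M)) v L L0 hLf hL0mem hLL0
          (v L) 2 3 le_rfl (le_of_eq hvL0) (fun M _ _ _ => hvle3 M)
        rw [hp y, hy1, hpoint y] at hb
        omega
    have key : ∀ L ∈ univ.filter (fun M => mem y M), g3 L + 2 = v L := by
      intro L hLf
      have h1 := hlow2 L hLf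
      have h2 := hvle3 L
      rw [hg3d]; split <;> omega
    have hs : ∑ L ∈ univ.filter (fun M => mem y M), (g3 L + 2) = 16 := by
      rw [Finset.sum_congr rfl key, hp y, hy1]
    rw [Finset.sum_add_distrib, Finset.sum_const, hpoint y, smul_eq_mul, ← ht3d y] at hs
    omega
  -- t3 z = 5
  have hTlns : T ∈ univ.filter (fun M => mem z M) :=
    Finset.mem_filter.mpr ⟨Finset.mem_univ T, hzT⟩
  have hzlines : ∀ L ∈ univ.filter (fun M => mem z M), L ≠ T → v L = 3 := by
    intro L hLf hLT
    have hb := helper2 (univ.filter (fun M => mem z M)) v L T hLf hTlns hLT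
      (v L) 1 3 le_rfl (le_of_eq hTv) (fun M _ _ _ => hvle3 M)
    rw [hp z, hz1, hpoint z] at hb
    have := hvle3 L
    omega
  have hzt3 : t3 z = 5 := by
    rw [ht3d, ← Finset.add_sum_erase _ _ hTlns]
    have h0 : g3 T = 0 := by rw [hg3d]; rw [hTv]; norm_num
    have h1 : ∀ L ∈ (univ.filter (fun M => mem z M)).erase T, g3 L = 1 := by
      intro L hL
      have := hzlines L (Finset.mem_of_mem_erase hL) (Finset.ne_of_mem_erase hL)
      rw [hg3d, if_pos this]
    rw [h0, Finset.sum_congr rfl h1, Finset.sum_const,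
      Finset.card_erase_of_mem hTlns, hpoint z]
    simp
  -- n3 = 15
  let n3 : ℕ := ∑ L, g3 L
  have hn3d : n3 = ∑ L, g3 L := rfl
  have hn3 : n3 = 15 := by
    have h1 : ∑ L, g3 L * v L = ∑ p, S p * t3 p := flag mem S g3
    have h2 : ∑ L, g3 L * v L = ∑ L, 3 * g3 L := by
      refine Finset.sum_congr rfl (fun L _ => ?_)
      rw [hg3d]; split
      · next h => simp [h]
      · ring
    have h3' : ∑ p, S p * t3 p = ∑ p, (4 * S p + if p = z then 1 else 0) := by
      refine Finset.sum_congr rfl (fun p _ => ?_)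
      by_cases hpz : p = z
      · subst hpz; rw [if_pos rfl, hzt3, hz1]
      · rw [if_neg hpz]
        rcases Nat.le_one_iff_eq_zero_or_eq_one.mp (hS1 p) with h | h
        · rw [h]; ring
        · rw [h, hB p h hpz]
    rw [h2, h3'] at h1
    rw [Finset.sum_add_distrib, Finset.sum_ite_eq' univ z, if_pos (Finset.mem_univ z)] at h1
    rw [← Finset.mul_sum, ← Finset.mul_sum, hsum, ← hn3d] at h1
    omega
  -- sum of t3 over points of T equals 15
  have hlf : ∑ p ∈ univ.filter (fun p => mem p T), t3 p = 15 := by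
    have := line_flag mem hline hmeet g3 T
    have h0 : g3 T = 0 := by rw [hg3d, hTv]; norm_num
    rw [h0, ← hn3d, hn3] at this
    calc ∑ p ∈ univ.filter (fun p => mem p T), t3 p
        = ∑ p ∈ univ.filter (fun p => mem p T), ∑ L ∈ univ.filter (fun L => mem p L), g3 L :=
          Finset.sum_congr rfl (fun p _ => ht3d p)
      _ = 15 := by rw [this]
  -- t3 x = 0
  have hxt3 : t3 x = 0 := by
    rw [ht3d]
    refine Finset.sum_eq_zero (fun L hLf => ?_)
    have hL : mem x L := (Finset.mem_filter.mp hLf).2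
    have := hx2 L hL
    rw [← hv L] at this
    rw [hg3d, if_neg (by omega)]
  -- t3 p ≤ 2 for other points of T
  have hother : ∀ p ∈ univ.filter (fun q => mem q T), p ≠ x → p ≠ z → t3 p ≤ 2 := by
    intro p hpf hpx hpz
    have hpT : mem p T := (Finset.mem_filter.mp hpf).2
    have hSp : S p = 0 := by
      rcases Nat.le_one_iff_eq_zero_or_eq_one.mp (hS1 p) with h | h
      · exact h
      · exact absurd (huniq p hpT h) hpz
    have hTlnsp : T ∈ univ.filter (fun M => mem p M) :=
      Finset.mem_filter.mpr ⟨Finset.mem_univ T, hpT⟩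
    -- lines through p other than T: v ∈ {0,2,3}
    have hvals : ∀ L ∈ (univ.filter (fun M => mem p M)).erase T, v L = 0 ∨ v L = 2 ∨ v L = 3 := by
      intro L hL
      have hLT := Finset.ne_of_mem_erase hL
      have hLp : mem p L := (Finset.mem_filter.mp (Finset.mem_of_mem_erase hL)).2
      have h1 : v L ≠ 1 := fun h => hLT (htan L h)
      have hnx : ¬ mem x L := by
        intro hxL
        obtain ⟨J, _, hJu⟩ := hjoin x p (fun h => hpx h.symm)
        have e1 : L = J := hJu L ⟨hxL, hLp⟩
        have e2 : T = J := hJu T ⟨hxT, hpT⟩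
        exact hLT (e1.trans e2.symm)
      have := h3 L hnx
      rw [← hv L] at this
      omega
    have hsum10 : ∑ L ∈ (univ.filter (fun M => mem p M)).erase T, v L = 10 := by
      have := hp p
      rw [← Finset.add_sum_erase _ _ hTlnsp, hTv, hSp] at this
      omega
    have hsplit : ∀ L ∈ (univ.filter (fun M => mem p M)).erase T,
        v L = 2 * (if v L = 2 then 1 else 0) + 3 * g3 L := by
      intro L hL
      rcases hvals L hL with h | h | h <;> rw [hg3d] <;> rw [h] <;> norm_num
    have habsum : 2 * (∑ L ∈ (univ.filter (fun M => mem p M)).erase T, (if v L = 2 then 1 else 0))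
        + 3 * (∑ L ∈ (univ.filter (fun M => mem p M)).erase T, g3 L) = 10 := by
      rw [Finset.mul_sum, Finset.mul_sum, ← Finset.sum_add_distrib,
        ← Finset.sum_congr rfl hsplit]
      exact hsum10
    have hcardle : (∑ L ∈ (univ.filter (fun M => mem p M)).erase T, (if v L = 2 then 1 else 0))
        + (∑ L ∈ (univ.filter (fun M => mem p M)).erase T, g3 L) ≤ 5 := by
      rw [← Finset.sum_add_distrib]
      calc ∑ L ∈ (univ.filter (fun M => mem p M)).erase T,
            ((if v L = 2 then 1 else 0) + g3 L)
          ≤ ∑ _L ∈ (univ.filter (fun M => mem p M)).erase T, 1 := by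
            refine Finset.sum_le_sum (fun L _ => ?_)
            rw [hg3d]; split <;> split <;> omega
        _ = 5 := by
            rw [Finset.sum_const, Finset.card_erase_of_mem hTlnsp, hpoint p, smul_eq_mul]
    have ht3p : t3 p = ∑ L ∈ (univ.filter (fun M => mem p M)).erase T, g3 L := by
      rw [ht3d, ← Finset.add_sum_erase _ _ hTlnsp]
      have h0 : g3 T = 0 := by rw [hg3d, hTv]; norm_num
      rw [h0, zero_add]
    rw [ht3p]
    omega
  -- final contradiction
  have hxmem : x ∈ univ.filter (fun q => mem q T) :=
    Finset.mem_filter.mpr ⟨Finset.mem_univ x, hxT⟩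
  have hzmem : z ∈ univ.filter (fun q => mem q T) :=
    Finset.mem_filter.mpr ⟨Finset.mem_univ z, hzT⟩
  have hb := helper2 (univ.filter (fun q => mem q T)) t3 x z hxmem hzmem (Ne.symm hzx)
    0 5 2 (le_of_eq hxt3) (le_of_eq hzt3) (fun d hd hdx hdz => hother d hd hdx hdz)
  rw [hlf, hline T] at hb
  omega


lemma a0case (hline : ∀ L, (univ.filter (fun p => mem p L)).card = 6)
    (hpoint : ∀ p, (univ.filter (fun L => mem p L)).card = 6)
    (hjoin : ∀ p q : Point, p ≠ q → ∃! L, mem p L ∧ mem q L)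
    (hmeet : ∀ L M : Line, L ≠ M → ∃! p, mem p L ∧ mem p M)
    (x : Point) (S : Point → ℕ) (hS1 : ∀ p, S p ≤ 1) (hSx : S x = 0)
    (hsum : ∑ p, S p = 13)
    (hx4 : ∀ L, mem x L → ∑ p ∈ univ.filter (fun p => mem p L), S p ≤ 4)
    (h3 : ∀ L, ¬ mem x L → ∑ p ∈ univ.filter (fun p => mem p L), S p ≤ 3) : False := by
  classical
  let v : Line → ℕ := fun L => ∑ p ∈ univ.filter (fun p => mem p L), S p
  have hv : ∀ L, v L = ∑ p ∈ univ.filter (fun p => mem p L), S p := fun L => rfl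
  have hp : ∀ p : Point, ∑ L ∈ univ.filter (fun L => mem p L), v L = 13 + 5 * S p := by
    intro p
    have := pencil mem hpoint hjoin S p
    rw [hsum] at this
    exact this
  have hsupp : ∀ L, v L ≠ 0 → ∃ y, mem y L ∧ S y = 1 := by
    intro L hL
    obtain ⟨p, hpmem, hp0⟩ := Finset.exists_ne_zero_of_sum_ne_zero (by rw [← hv L]; exact hL)
    exact ⟨p, (Finset.mem_filter.mp hpmem).2, by have := hS1 p; omega⟩
  -- x-lines have v = 0 or v ≥ 3
  have hxvals : ∀ L, mem x L → v L = 0 ∨ (3 ≤ v L ∧ v L ≤ 4) := by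
    intro L hxL
    by_cases h0 : v L = 0
    · exact Or.inl h0
    · right
      obtain ⟨y, hyL, hy1⟩ := hsupp L h0
      have hyx : x ≠ y := by intro h; rw [← h] at hy1; omega
      obtain ⟨L0, _, hL0u⟩ := hjoin x y hyx
      have hLL0 : L = L0 := hL0u L ⟨hxL, hyL⟩
      have hyLmem : L ∈ univ.filter (fun M => mem y M) :=
        Finset.mem_filter.mpr ⟨Finset.mem_univ L, hyL⟩
      have hother : ∀ M ∈ univ.filter (fun N => mem y N), M ≠ L → v M ≤ 3 := by
        intro M hMf hML
        have hMy : mem y M := (Finset.mem_filter.mp hMf).2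
        have hnx : ¬ mem x M := by
          intro hxM
          exact hML ((hL0u M ⟨hxM, hMy⟩).trans hLL0.symm)
        exact h3 M hnx
      have hb := helper1 (univ.filter (fun M => mem y M)) v L hyLmem (v L) 3 le_rfl hother
      rw [hp y, hy1, hpoint y] at hb
      have h4 := hx4 L hxL
      rw [← hv L] at h4
      omega
  -- exactly one x-line with v = 4
  have ht4 : ((univ.filter (fun L => mem x L)).filter (fun L => v L = 4)).card = 1 := by
    have key : ∀ L ∈ univ.filter (fun L => mem x L),
        v L = 3 * (if 3 ≤ v L then 1 else 0) + (if v L = 4 then 1 else 0) := by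
      intro L hLf
      rcases hxvals L (Finset.mem_filter.mp hLf).2 with h | h
      · rw [h, if_neg (by omega), if_neg (by omega)]
      · rcases (by omega : v L = 3 ∨ v L = 4) with e | e <;>
          rw [e, if_pos (by omega)]
        · rw [if_neg (by omega)]
        · rw [if_pos rfl]
    have hs : 3 * (∑ L ∈ univ.filter (fun L => mem x L), (if 3 ≤ v L then 1 else 0))
        + (∑ L ∈ univ.filter (fun L => mem x L), (if v L = 4 then 1 else 0)) = 13 := by
      rw [Finset.mul_sum, ← Finset.sum_add_distrib, ← Finset.sum_congr rfl key, hp x, hSx]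
    have hle : (∑ L ∈ univ.filter (fun L => mem x L), (if v L = 4 then 1 else 0))
        ≤ ∑ L ∈ univ.filter (fun L => mem x L), (if 3 ≤ v L then 1 else 0) := by
      refine Finset.sum_le_sum (fun L _ => ?_)
      split
      · next h => rw [if_pos (by omega)]
      · omega
    have hc6 : (∑ L ∈ univ.filter (fun L => mem x L), (if 3 ≤ v L then 1 else 0)) ≤ 6 := by
      calc (∑ L ∈ univ.filter (fun L => mem x L), (if 3 ≤ v L then 1 else 0))
          ≤ ∑ _L ∈ univ.filter (fun L => mem x L), 1 :=
            Finset.sum_le_sum (fun L _ => by split <;> omega)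
        _ = 6 := by rw [Finset.sum_const, hpoint x, smul_eq_mul, mul_one]
    rw [← sum_indicator_card]
    omega
  obtain ⟨T4, hT4mem, hT4v, hT4uniq⟩ := get_unique _ _ ht4
  have hxT4 : mem x T4 := (Finset.mem_filter.mp hT4mem).2
  have hxother : ∀ L, mem x L → L ≠ T4 → v L ≤ 3 := by
    intro L hxL hLT4
    rcases hxvals L hxL with h | h
    · omega
    · rcases (by omega : v L = 3 ∨ v L = 4) with e | e
      · omega
      · exact absurd (hT4uniq L (Finset.mem_filter.mpr ⟨Finset.mem_univ L, hxL⟩) e) hLT4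
  -- remove a support point on T4
  obtain ⟨w, hwT4, hw1⟩ := hsupp T4 (by omega)
  refine no12 mem hline hpoint hjoin hmeet (fun p => if p = w then 0 else S p) ?_ ?_ ?_
  · intro p
    show (if p = w then 0 else S p) ≤ 1
    split
    · omega
    · exact hS1 p
  · show (∑ p, (if p = w then 0 else S p)) = 12
    have := sum_zero_out univ S w hw1
    rw [if_pos (Finset.mem_univ w), hsum] at this
    omega
  · intro L
    show (∑ p ∈ univ.filter (fun p => mem p L), (if p = w then 0 else S p)) ≤ 3
    have hzo := sum_zero_out (univ.filter (fun p => mem p L)) S w hw1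
    rw [← hv L] at hzo
    by_cases hwL : mem w L
    · rw [if_pos (Finset.mem_filter.mpr ⟨Finset.mem_univ w, hwL⟩)] at hzo
      by_cases hxL : mem x L
      · by_cases hLT4 : L = T4
        · rw [hLT4] at hzo ⊢; omega
        · have := hxother L hxL hLT4; omega
      · have := h3 L hxL; rw [← hv L] at this; omega
    · rw [if_neg (by simp [hwL]), add_zero] at hzo
      by_cases hxL : mem x L
      · have hLT4 : L ≠ T4 := by intro e; rw [e] at hwL; exact hwL hwT4
        have := hxother L hxL hLT4; omega
      · have := h3 L hxL; rw [← hv L] at this; omega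

lemma a0case14 (hline : ∀ L, (univ.filter (fun p => mem p L)).card = 6)
    (hpoint : ∀ p, (univ.filter (fun L => mem p L)).card = 6)
    (hjoin : ∀ p q : Point, p ≠ q → ∃! L, mem p L ∧ mem q L)
    (hmeet : ∀ L M : Line, L ≠ M → ∃! p, mem p L ∧ mem p M)
    (x : Point) (S : Point → ℕ) (hS1 : ∀ p, S p ≤ 1) (hSx : S x = 0)
    (hsum : ∑ p, S p = 14)
    (hx4 : ∀ L, mem x L → ∑ p ∈ univ.filter (fun p => mem p L), S p ≤ 4)
    (h3 : ∀ L, ¬ mem x L → ∑ p ∈ univ.filter (fun p => mem p L), S p ≤ 3) : False := by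
  classical
  let v : Line → ℕ := fun L => ∑ p ∈ univ.filter (fun p => mem p L), S p
  have hv : ∀ L, v L = ∑ p ∈ univ.filter (fun p => mem p L), S p := fun L => rfl
  have hp : ∀ p : Point, ∑ L ∈ univ.filter (fun L => mem p L), v L = 14 + 5 * S p := by
    intro p
    have := pencil mem hpoint hjoin S p
    rw [hsum] at this
    exact this
  have hxvals : ∀ L, mem x L → v L = 0 ∨ v L = 4 := by
    intro L hxL
    by_cases h0 : v L = 0
    · exact Or.inl h0
    · right
      obtain ⟨p, hpmem, hp0⟩ := Finset.exists_ne_zero_of_sum_ne_zero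
        (show ∑ p ∈ univ.filter (fun p => mem p L), S p ≠ 0 by rw [← hv L]; exact h0)
      have hyL : mem p L := (Finset.mem_filter.mp hpmem).2
      have hy1 : S p = 1 := by have := hS1 p; omega
      have hyx : x ≠ p := by intro h; rw [← h] at hy1; omega
      obtain ⟨L0, _, hL0u⟩ := hjoin x p hyx
      have hLL0 : L = L0 := hL0u L ⟨hxL, hyL⟩
      have hyLmem : L ∈ univ.filter (fun M => mem p M) :=
        Finset.mem_filter.mpr ⟨Finset.mem_univ L, hyL⟩
      have hother : ∀ M ∈ univ.filter (fun N => mem p N), M ≠ L → v M ≤ 3 := by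
        intro M hMf hML
        have hMy : mem p M := (Finset.mem_filter.mp hMf).2
        have hnx : ¬ mem x M := by
          intro hxM
          exact hML ((hL0u M ⟨hxM, hMy⟩).trans hLL0.symm)
        exact h3 M hnx
      have hb := helper1 (univ.filter (fun M => mem p M)) v L hyLmem (v L) 3 le_rfl hother
      rw [hp p, hy1, hpoint p] at hb
      have h4 := hx4 L hxL
      rw [← hv L] at h4
      omega
  have key : ∀ L ∈ univ.filter (fun L => mem x L),
      v L = 4 * (if v L = 4 then 1 else 0) := by
    intro L hLf
    rcases hxvals L (Finset.mem_filter.mp hLf).2 with h | h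
    · rw [h, if_neg (by omega)]
    · rw [h, if_pos rfl]
  have hs : 4 * (∑ L ∈ univ.filter (fun L => mem x L), (if v L = 4 then 1 else 0)) = 14 := by
    rw [Finset.mul_sum, ← Finset.sum_congr rfl key, hp x, hSx]
  omega


end Plane
end Stmt2Aux

/-- a `(k,4)`-arc (multiset) in `PG(2,5)` all of whose `4`-lines
pass through a common point has `k ≤ 12`. The plane `PG(2,5)` is axiomatized
as the (unique) projective plane of order 5. -/
theorem stmt2
    {Point Line : Type} [Fintype Point] [Fintype Line]
    (mem : Point → Line → Prop) [∀ p L, Decidable (mem p L)]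
    (hcardP : Fintype.card Point = 31)
    (hcardL : Fintype.card Line = 31)
    (hline : ∀ L, (univ.filter (fun p => mem p L)).card = 6)
    (hpoint : ∀ p, (univ.filter (fun L => mem p L)).card = 6)
    (hjoin : ∀ p q : Point, p ≠ q → ∃! L, mem p L ∧ mem q L)
    (hmeet : ∀ L M : Line, L ≠ M → ∃! p, mem p L ∧ mem p M)
    (F : Point → ℕ) (k : ℕ)
    (hk : ∑ p, F p = k)
    (harc : ∀ L, ∑ p ∈ univ.filter (fun p => mem p L), F p ≤ 4)
    (hconc : ∃ x : Point, ∀ L,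
      (∑ p ∈ univ.filter (fun p => mem p L), F p) = 4 → mem x L) :
    k ≤ 12 := by
  classical
  by_contra hlt
  push_neg at hlt
  obtain ⟨x, hx⟩ := hconc
  have hp : ∀ p : Point, ∑ L ∈ univ.filter (fun L => mem p L),
      (∑ q ∈ univ.filter (fun q => mem q L), F q) = k + 5 * F p := by
    intro p
    have := Stmt2Aux.pencil mem hpoint hjoin F p
    rw [hk] at this
    exact this
  have h24 : k + 5 * F x ≤ 24 := by
    have h1 := hp x
    have h2 : ∑ L ∈ univ.filter (fun L => mem x L),
        (∑ q ∈ univ.filter (fun q => mem q L), F q)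
        ≤ ∑ _L ∈ univ.filter (fun L => mem x L), 4 :=
      Finset.sum_le_sum (fun L _ => harc L)
    rw [Finset.sum_const, hpoint x, smul_eq_mul, h1] at h2
    omega
  have hFy : ∀ y, y ≠ x → k + 5 * F y ≤ 19 := by
    intro y hyx
    obtain ⟨L0, ⟨hxL0, hyL0⟩, hL0u⟩ := hjoin x y (Ne.symm hyx)
    have hL0mem : L0 ∈ univ.filter (fun M => mem y M) :=
      Finset.mem_filter.mpr ⟨Finset.mem_univ L0, hyL0⟩
    have hb := Stmt2Aux.helper1 (univ.filter (fun M => mem y M))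
      (fun L => ∑ q ∈ univ.filter (fun q => mem q L), F q) L0 hL0mem 4 3 (harc L0) ?_
    · rw [hp y, hpoint y] at hb
      omega
    · intro M hMf hML0
      have hMy : mem y M := (Finset.mem_filter.mp hMf).2
      have hnx : ¬ mem x M := fun hxM => hML0 (hL0u M ⟨hxM, hMy⟩)
      have h4 := harc M
      have hne4 : ∑ q ∈ univ.filter (fun q => mem q M), F q ≠ 4 :=
        fun he => hnx (hx M he)
      show (∑ q ∈ univ.filter (fun q => mem q M), F q) ≤ 3
      omega
  have hk14 : k ≤ 14 := by
    by_contra h15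
    push_neg at h15
    have hF0 : ∀ y, y ≠ x → F y = 0 := by
      intro y hyx
      have := hFy y hyx
      omega
    have hkFx : k = F x := by
      rw [← hk]
      exact Finset.sum_eq_single x (fun y _ hy => hF0 y hy)
        (fun h => absurd (Finset.mem_univ x) h)
    obtain ⟨L, hLmem⟩ : (univ.filter (fun L => mem x L)).Nonempty := by
      rw [← Finset.card_pos, hpoint x]; norm_num
    have hxL : mem x L := (Finset.mem_filter.mp hLmem).2
    have : F x ≤ ∑ q ∈ univ.filter (fun q => mem q L), F q :=
      Finset.single_le_sum (f := F) (fun i _ => Nat.zero_le _)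
        (Finset.mem_filter.mpr ⟨Finset.mem_univ x, hxL⟩)
    have := harc L
    omega
  have hFx2 : F x ≤ 2 := by omega
  have hF1 : ∀ y, y ≠ x → F y ≤ 1 := by
    intro y hyx
    have := hFy y hyx
    omega
  -- the indicator of the support away from x
  set S : Point → ℕ := fun p => if p = x then 0 else F p with hSdef
  have hS1 : ∀ p, S p ≤ 1 := by
    intro p
    show (if p = x then 0 else F p) ≤ 1
    split
    · omega
    · next h => exact hF1 p h
  have hSx : S x = 0 := by show (if x = x then 0 else F x) = 0; rw [if_pos rfl]
  have hrel : ∀ A : Finset Point, (∑ p ∈ A, S p) + (if x ∈ A then F x else 0)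
      = ∑ p ∈ A, F p := by
    intro A
    by_cases h : x ∈ A
    · rw [if_pos h, ← Finset.add_sum_erase A S h, ← Finset.add_sum_erase A F h, hSx]
      have : ∑ p ∈ A.erase x, S p = ∑ p ∈ A.erase x, F p :=
        Finset.sum_congr rfl (fun p hp => by
          show (if p = x then 0 else F p) = F p
          exact if_neg (Finset.ne_of_mem_erase hp))
      omega
    · rw [if_neg h, add_zero]
      exact Finset.sum_congr rfl (fun p hp => by
        show (if p = x then 0 else F p) = F p
        exact if_neg (fun e => h (by rw [← e]; exact hp)))
  have hsumS : (∑ p, S p) + F x = k := by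
    have := hrel univ
    rw [if_pos (Finset.mem_univ x), hk] at this
    exact this
  have hxb : ∀ L, mem x L → (∑ p ∈ univ.filter (fun p => mem p L), S p) + F x ≤ 4 := by
    intro L hxL
    have := hrel (univ.filter (fun p => mem p L))
    rw [if_pos (Finset.mem_filter.mpr ⟨Finset.mem_univ x, hxL⟩)] at this
    have := harc L
    omega
  have hnb : ∀ L, ¬ mem x L → (∑ p ∈ univ.filter (fun p => mem p L), S p) ≤ 3 := by
    intro L hxL
    have h1 := hrel (univ.filter (fun p => mem p L))
    rw [if_neg (by simp [hxL])] at h1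
    have h4 := harc L
    have hne4 : ∑ q ∈ univ.filter (fun q => mem q L), F q ≠ 4 :=
      fun he => hxL (hx L he)
    omega
  have hS3 : ∀ L, F x ≥ 1 → (∑ p ∈ univ.filter (fun p => mem p L), S p) ≤ 3 := by
    intro L ha
    by_cases hxL : mem x L
    · have := hxb L hxL; omega
    · exact hnb L hxL
  have hcase : k = 13 ∨ k = 14 := by omega
  have hacase : F x = 0 ∨ F x = 1 ∨ F x = 2 := by omega
  rcases hcase with hk13 | hk14'
  · rcases hacase with ha | ha | ha
    · exact Stmt2Aux.a0case mem hline hpoint hjoin hmeet x S hS1 hSx (by omega) (fun L hL => by have := hxb L hL; omega) hnb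
    · exact Stmt2Aux.no12 mem hline hpoint hjoin hmeet S hS1 (by omega) (fun L => hS3 L (by omega))
    · exact Stmt2Aux.a2case mem hline hpoint hjoin hmeet x S hS1 hSx (by omega) (fun L hL => by have := hxb L hL; omega) hnb
  · rcases hacase with ha | ha | ha
    · exact Stmt2Aux.a0case14 mem hline hpoint hjoin hmeet x S hS1 hSx (by omega) (fun L hL => by have := hxb L hL; omega) hnb
    · -- sum S = 13 : remove one support point
      have hsum13 : ∑ p, S p = 13 := by omega
      obtain ⟨w, _, hw0⟩ := Finset.exists_ne_zero_of_sum_ne_zero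
        (show ∑ p, S p ≠ 0 by omega)
      have hw1 : S w = 1 := by have := hS1 w; omega
      refine Stmt2Aux.no12 mem hline hpoint hjoin hmeet (fun p => if p = w then 0 else S p) ?_ ?_ ?_
      · intro p
        show (if p = w then 0 else S p) ≤ 1
        split
        · omega
        · exact hS1 p
      · show (∑ p, (if p = w then 0 else S p)) = 12
        have := Stmt2Aux.sum_zero_out univ S w hw1
        rw [if_pos (Finset.mem_univ w)] at this
        omega
      · intro L
        show (∑ p ∈ univ.filter (fun p => mem p L), (if p = w then 0 else S p)) ≤ 3
        have h1 := Stmt2Aux.sum_zero_out (univ.filter (fun p => mem p L)) S w hw1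
        have h2 := hS3 L (by omega)
        omega
    · exact Stmt2Aux.no12 mem hline hpoint hjoin hmeet S hS1 (by omega) (fun L => hS3 L (by omega))
end

section
/- Every (k,6)-arc in PG(2,4) (a multiset of points of total size k with at most 6 points on every line) having exactly 8 points of multiplicity 2 and all other points of multiplicity at most 1 satisfies k ≤ 19. -/
open Finset

/-- Double counting: counting incidences two ways. -/
lemma swap_cnt {α β : Type} (A : Finset α) (B : Finset β) (R : α → β → Prop)
    [∀ a b, Decidable (R a b)] :
    ∑ b ∈ B, (A.filter (fun a => R a b)).card = ∑ a ∈ A, (B.filter (fun b => R a b)).card := by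
  simp only [Finset.card_filter]
  rw [Finset.sum_comm]

/-- Weighted double counting. -/
lemma swap_wt {α β : Type} (A : Finset α) (B : Finset β) (R : α → β → Prop)
    [∀ a b, Decidable (R a b)] (g : β → ℕ) :
    ∑ b ∈ B, (A.filter (fun a => R a b)).card * g b
      = ∑ a ∈ A, ∑ b ∈ B.filter (fun b => R a b), g b := by
  have h : ∀ b ∈ B, (A.filter (fun a => R a b)).card * g b
      = ∑ a ∈ A, (if R a b then g b else 0) := by
    intro b _
    rw [Finset.card_filter, Finset.sum_mul]
    apply Finset.sum_congr rfl
    intro a _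
    split <;> simp
  rw [Finset.sum_congr rfl h, Finset.sum_comm]
  apply Finset.sum_congr rfl
  intro a _
  rw [Finset.sum_filter]

/-- From unique existence to a filter of cardinality one. -/
lemma filter_card_one {α : Type} [Fintype α] (P : α → Prop) [DecidablePred P]
    (h : ∃! x, P x) : (Finset.univ.filter P).card = 1 := by
  obtain ⟨x, hx, hu⟩ := h
  rw [Finset.card_eq_one]
  refine ⟨x, ?_⟩
  ext y
  simp only [Finset.mem_filter, Finset.mem_univ, true_and, Finset.mem_singleton]
  exact ⟨fun hy => hu y hy, fun hy => hy ▸ hx⟩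

/-- a `(k,6)`-arc in `PG(2,4)` with exactly 8 double points and all
other points of multiplicity at most 1 satisfies `k ≤ 19`. -/
theorem stmt3
    {Point Line : Type} [Fintype Point] [Fintype Line]
    (mem : Point → Line → Prop) [∀ p L, Decidable (mem p L)]
    (hcardP : Fintype.card Point = 21)
    (hcardL : Fintype.card Line = 21)
    (hline : ∀ L, (univ.filter (fun p => mem p L)).card = 5)
    (hpoint : ∀ p, (univ.filter (fun L => mem p L)).card = 5)
    (hjoin : ∀ p q : Point, p ≠ q → ∃! L, mem p L ∧ mem q L)
    (hmeet : ∀ L M : Line, L ≠ M → ∃! p, mem p L ∧ mem p M)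
    (K : Point → ℕ) (k : ℕ)
    (hmult : ∀ p, K p ≤ 2)
    (hD : (univ.filter (fun p => K p = 2)).card = 8)
    (hk : ∑ p, K p = k)
    (harc : ∀ L, ∑ p ∈ univ.filter (fun p => mem p L), K p ≤ 6) :
    k ≤ 19 := by
  classical
  set D : Finset Point := univ.filter (fun p => K p = 2) with hDdef
  set S : Finset Point := univ.filter (fun p => K p = 1) with hSdef
  set dl : Line → ℕ := fun L => (D.filter (fun p => mem p L)).card with hdl
  set sl : Line → ℕ := fun L => (S.filter (fun p => mem p L)).card with hsl
  set s : ℕ := S.card with hs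
  -- k = 16 + s
  have hk16 : k = 16 + s := by
    have h1 : ∀ p, K p = 2 * (if K p = 2 then 1 else 0) + (if K p = 1 then 1 else 0) := by
      intro p
      have := hmult p
      split_ifs <;> omega
    rw [← hk, Finset.sum_congr rfl (fun p _ => h1 p), Finset.sum_add_distrib,
      ← Finset.mul_sum, ← Finset.card_filter, ← Finset.card_filter]
    rw [hDdef] at hD
    rw [hD, hs, hSdef]
    norm_num
  -- suffices s ≤ 3
  suffices hs3 : s ≤ 3 by omega
  by_contra hs4'
  have hs4 : 4 ≤ s := by omega
  -- per line: 2 * dl L + sl L ≤ 6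
  have harc2 : ∀ L, 2 * dl L + sl L ≤ 6 := by
    intro L
    have key : ∑ p ∈ univ.filter (fun p => mem p L), K p = 2 * dl L + sl L := by
      simp only [hdl, hsl, hDdef, hSdef, Finset.filter_filter, Finset.card_filter]
      rw [Finset.sum_filter, Finset.mul_sum, ← Finset.sum_add_distrib]
      apply Finset.sum_congr rfl
      intro p _
      have := hmult p
      by_cases hmem : mem p L <;> simp [hmem] <;> split_ifs <;> omega
    rw [← key]
    exact harc L
  -- joins as filter cards
  have hjoin1 : ∀ p q : Point, p ≠ q →
      (univ.filter (fun L => mem p L ∧ mem q L)).card = 1 := by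
    intro p q hpq
    exact filter_card_one _ (hjoin p q hpq)
  -- sum of sl over lines through a double equals s
  have key_sl : ∀ d ∈ D, ∑ L ∈ univ.filter (fun L => mem d L), sl L = s := by
    intro d hd
    have hKd : K d = 2 := by
      rw [hDdef] at hd; simpa using hd
    simp only [hsl]
    rw [swap_cnt S (univ.filter (fun L => mem d L)) (fun q L => mem q L)]
    rw [hs, Finset.card_eq_sum_ones S]
    apply Finset.sum_congr rfl
    intro q hq
    have hKq : K q = 1 := by rw [hSdef] at hq; simpa using hq
    have hqd : q ≠ d := fun h => by rw [h, hKd] at hKq; omega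
    rw [Finset.filter_filter]
    exact hjoin1 d q hqd.symm
  -- sum of dl over lines through any point
  have key_dl : ∀ p : Point, ∑ L ∈ univ.filter (fun L => mem p L), dl L
      = 8 + (if p ∈ D then 4 else 0) := by
    intro p
    simp only [hdl]
    rw [swap_cnt D (univ.filter (fun L => mem p L)) (fun q L => mem q L)]
    have h2 : ∀ q ∈ D, ((univ.filter (fun L => mem p L)).filter (fun L => mem q L)).card
        = if q = p then 5 else 1 := by
      intro q hq
      rw [Finset.filter_filter]
      split_ifs with h
      · rw [h]
        simpa using hpoint p
      · exact hjoin1 p q (fun hh => h hh.symm)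
    rw [Finset.sum_congr rfl h2]
    have h3 : ∀ q ∈ D, (if q = p then 5 else 1) = 1 + (if q = p then 4 else 0) := by
      intro q _; split_ifs <;> rfl
    rw [Finset.sum_congr rfl h3, Finset.sum_add_distrib, ← Finset.card_eq_sum_ones,
      Finset.sum_ite_eq' D p (fun _ => 4)]
    rw [hD]
  -- dl L ≥ 1 on lines through a double
  have dl_pos : ∀ d ∈ D, ∀ L, mem d L → 1 ≤ dl L := by
    intro d hd L hdL
    rw [hdl]
    exact Finset.card_pos.mpr ⟨d, Finset.mem_filter.mpr ⟨hd, hdL⟩⟩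
  -- sl L ≥ 1 on lines through a single
  have sl_pos : ∀ q ∈ S, ∀ L, mem q L → 1 ≤ sl L := by
    intro q hq L hqL
    rw [hsl]
    exact Finset.card_pos.mpr ⟨q, Finset.mem_filter.mpr ⟨hq, hqL⟩⟩
  have dl3 : ∀ L, dl L ≤ 3 := fun L => by have := harc2 L; omega
  -- the set of 1-lines and 3-lines
  set F1 : Finset Line := univ.filter (fun L => dl L = 1) with hF1
  set F3 : Finset Line := univ.filter (fun L => dl L = 3) with hF3
  set N1 : ℕ := F1.card with hN1
  set N2 : ℕ := (univ.filter (fun L => dl L = 2)).card with hN2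
  set N3 : ℕ := F3.card with hN3
  -- x d : number of 3-lines through d ; specials
  set x : Point → ℕ := fun d => (F3.filter (fun L => mem d L)).card with hx
  set Dspec : Finset Point := D.filter (fun d => x d = 3) with hDspec
  set m : ℕ := Dspec.card with hm
  -- For a single q : the number of 1-lines through q is 0 or 2
  have single_lines : ∀ q ∈ S, (F1.filter (fun L => mem q L)).card = 0 ∨
      (F1.filter (fun L => mem q L)).card = 2 := by
    intro q hq
    have hdl2 : ∀ L, mem q L → dl L ≤ 2 := by
      intro L hL
      have h1 := harc2 L
      have h2 := sl_pos q hq L hL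
      omega
    set lq := univ.filter (fun L => mem q L) with hlq
    have hc5 : lq.card = 5 := hpoint q
    have hKq : K q = 1 := by rw [hSdef] at hq; simpa using hq
    have hqnD : q ∉ D := by
      rw [hDdef]; simp only [Finset.mem_filter, Finset.mem_univ, true_and]; omega
    have hsum8 : ∑ L ∈ lq, dl L = 8 := by
      have h := key_dl q
      rw [if_neg hqnD] at h
      exact h
    set c1 := (lq.filter (fun L => dl L = 1)).card with hc1
    set c2 := (lq.filter (fun L => dl L = 2)).card with hc2
    have e1 : c1 + 2 * c2 = 8 := by
      rw [hc1, hc2, Finset.card_filter, Finset.card_filter, ← hsum8, Finset.mul_sum,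
        ← Finset.sum_add_distrib]
      apply Finset.sum_congr rfl
      intro L hL
      have h2 := hdl2 L (by rw [hlq] at hL; simpa using hL)
      split_ifs <;> omega
    have e2 : c1 + c2 ≤ 5 := by
      rw [hc1, hc2, ← hc5, Finset.card_filter, Finset.card_filter, Finset.card_eq_sum_ones lq,
        ← Finset.sum_add_distrib]
      apply Finset.sum_le_sum
      intro L hL
      split_ifs <;> omega
    have heq : F1.filter (fun L => mem q L) = lq.filter (fun L => dl L = 1) := by
      rw [hF1, hlq, Finset.filter_comm]
    rw [heq, ← hc1]
    omega
  -- W : total singles on 1-lines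
  set W : ℕ := ∑ L ∈ F1, sl L with hW
  have hWsum : W = ∑ q ∈ S, (F1.filter (fun L => mem q L)).card := by
    rw [hW, hsl, swap_cnt S F1 (fun q L => mem q L)]
  have hW2s : W ≤ 2 * s := by
    rw [hWsum, hs]
    calc ∑ q ∈ S, (F1.filter (fun L => mem q L)).card ≤ ∑ q ∈ S, 2 := by
          apply Finset.sum_le_sum
          intro q hq
          rcases single_lines q hq with h | h <;> omega
      _ = 2 * S.card := by rw [Finset.sum_const, smul_eq_mul]; ring
  -- per special double: s ≤ 2 + (singles on its 1-lines)
  have spec_ineq : ∀ d ∈ Dspec, s ≤ 2 + ∑ L ∈ F1.filter (fun L => mem d L), sl L := by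
    intro d hd
    have hdD : d ∈ D := Finset.mem_of_mem_filter d hd
    have hx3 : x d = 3 := by
      rw [hDspec] at hd
      exact (Finset.mem_filter.mp hd).2
    set lq := univ.filter (fun L => mem d L) with hlq
    have hc5 : lq.card = 5 := hpoint d
    have hsum12 : ∑ L ∈ lq, dl L = 12 := by
      have h := key_dl d
      rw [if_pos hdD] at h
      exact h
    have hge1 : ∀ L ∈ lq, 1 ≤ dl L := by
      intro L hL
      exact dl_pos d hdD L (by rw [hlq] at hL; simpa using hL)
    set c1 := (lq.filter (fun L => dl L = 1)).card with hc1
    set c2 := (lq.filter (fun L => dl L = 2)).card with hc2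
    set c3 := (lq.filter (fun L => dl L = 3)).card with hc3
    have hc3x : c3 = 3 := by
      rw [hc3, hlq, Finset.filter_comm, ← hF3]
      exact hx3
    have e1 : c1 + 2 * c2 + 3 * c3 = 12 := by
      rw [hc1, hc2, hc3, Finset.card_filter, Finset.card_filter, Finset.card_filter, ← hsum12,
        Finset.mul_sum, Finset.mul_sum, ← Finset.sum_add_distrib, ← Finset.sum_add_distrib]
      apply Finset.sum_congr rfl
      intro L hL
      have h2 := dl3 L
      have h3 := hge1 L hL
      split_ifs <;> omega
    have e2 : c1 + c2 + c3 = 5 := by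
      rw [hc1, hc2, hc3, ← hc5, Finset.card_filter, Finset.card_filter, Finset.card_filter,
        Finset.card_eq_sum_ones lq, ← Finset.sum_add_distrib, ← Finset.sum_add_distrib]
      apply Finset.sum_congr rfl
      intro L hL
      have h2 := dl3 L
      have h3 := hge1 L hL
      split_ifs <;> omega
    have hc2one : c2 = 1 := by omega
    -- s = sum of sl over lines through d
    have hsplit : s ≤ (∑ L ∈ lq, (if dl L = 1 then sl L else 0)) + 2 * c2 := by
      rw [← key_sl d hdD, ← hlq, hc2, Finset.card_filter, Finset.mul_sum,
        ← Finset.sum_add_distrib]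
      apply Finset.sum_le_sum
      intro L hL
      have h2 := harc2 L
      have h3 := hge1 L hL
      have h4 := dl3 L
      split_ifs <;> omega
    have heq : ∑ L ∈ lq, (if dl L = 1 then sl L else 0)
        = ∑ L ∈ F1.filter (fun L => mem d L), sl L := by
      rw [hF1, Finset.filter_comm, ← hlq, Finset.sum_filter, Finset.sum_filter,
        Finset.sum_filter]
    omega
  -- summing over specials : m * s ≤ 2 * m + W
  have main : m * s ≤ 2 * m + W := by
    have h1 : ∑ _d ∈ Dspec, s ≤ ∑ d ∈ Dspec, (2 + ∑ L ∈ F1.filter (fun L => mem d L), sl L) :=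
      Finset.sum_le_sum spec_ineq
    rw [Finset.sum_const, smul_eq_mul, Finset.sum_add_distrib, Finset.sum_const,
      smul_eq_mul] at h1
    have h2 : ∑ d ∈ Dspec, ∑ L ∈ F1.filter (fun L => mem d L), sl L ≤ W := by
      rw [← swap_wt Dspec F1 (fun d L => mem d L) sl, hW]
      apply Finset.sum_le_sum
      intro L hL
      have hdl1 : dl L = 1 := by rw [hF1] at hL; simpa using hL
      have hsub : (Dspec.filter (fun d => mem d L)).card ≤ dl L := by
        rw [hdl]
        apply Finset.card_le_card
        apply Finset.filter_subset_filter
        rw [hDspec]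
        exact Finset.filter_subset _ _
      calc (Dspec.filter (fun d => mem d L)).card * sl L ≤ 1 * sl L := by
            apply Nat.mul_le_mul_right
            omega
        _ = sl L := one_mul _
    rw [← hm] at h1
    calc m * s ≤ m * 2 + ∑ d ∈ Dspec, ∑ L ∈ F1.filter (fun L => mem d L), sl L := h1
      _ ≤ 2 * m + W := by omega
  -- global counts : Σ dl = 40, Σ dl (dl - 1) = 56
  have glob1 : ∑ L, dl L = 40 := by
    have h0 : ∑ L ∈ (univ : Finset Line), (D.filter (fun p => mem p L)).card
        = ∑ q ∈ D, ((univ : Finset Line).filter (fun L => mem q L)).card :=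
      swap_cnt D univ (fun q L => mem q L)
    simp only [hdl]
    rw [h0, Finset.sum_congr rfl (fun q _ => hpoint q), Finset.sum_const, smul_eq_mul, hD]
  have glob2 : ∑ L, dl L * (dl L - 1) = 56 := by
    have hswap : ∑ L ∈ (univ : Finset Line), (D.filter (fun p => mem p L)).card * (dl L - 1)
        = ∑ q ∈ D, ∑ L ∈ (univ : Finset Line).filter (fun L => mem q L), (dl L - 1) :=
      swap_wt D univ (fun q L => mem q L) (fun L => dl L - 1)
    have hinner : ∀ q ∈ D, ∑ L ∈ (univ : Finset Line).filter (fun L => mem q L), (dl L - 1)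
        = 7 := by
      intro q hq
      have h12 : ∑ L ∈ univ.filter (fun L => mem q L), dl L = 12 := by
        have h := key_dl q
        rw [if_pos hq] at h
        exact h
      have h5 : (univ.filter (fun L => mem q L)).card = 5 := hpoint q
      have hsum : ∑ L ∈ univ.filter (fun L => mem q L), (dl L - 1)
          + (univ.filter (fun L => mem q L)).card
          = ∑ L ∈ univ.filter (fun L => mem q L), dl L := by
        rw [Finset.card_eq_sum_ones, ← Finset.sum_add_distrib]
        apply Finset.sum_congr rfl
        intro L hL
        have := dl_pos q hq L (by simpa using hL)
        omega
      omega
    have hsame : ∑ L, dl L * (dl L - 1)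
        = ∑ q ∈ D, ∑ L ∈ (univ : Finset Line).filter (fun L => mem q L), (dl L - 1) := by
      rw [← hswap]
    rw [hsame, Finset.sum_congr rfl hinner, Finset.sum_const, smul_eq_mul, hD]
  -- N-identities
  have glob1' : N1 + 2 * N2 + 3 * N3 = 40 := by
    rw [hN1, hN2, hN3, hF1, hF3, Finset.card_filter, Finset.card_filter, Finset.card_filter,
      ← glob1, Finset.mul_sum, Finset.mul_sum, ← Finset.sum_add_distrib, ← Finset.sum_add_distrib]
    apply Finset.sum_congr rfl
    intro L _
    have h := dl3 L
    have h0 : dl L = 0 ∨ dl L = 1 ∨ dl L = 2 ∨ dl L = 3 := by omega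
    rcases h0 with h0 | h0 | h0 | h0 <;> rw [h0] <;> norm_num
  have glob2' : 2 * N2 + 6 * N3 = 56 := by
    rw [hN2, hN3, hF3, Finset.card_filter, Finset.card_filter, ← glob2,
      Finset.mul_sum, Finset.mul_sum, ← Finset.sum_add_distrib]
    apply Finset.sum_congr rfl
    intro L _
    have h := dl3 L
    have h0 : dl L = 0 ∨ dl L = 1 ∨ dl L = 2 ∨ dl L = 3 := by omega
    rcases h0 with h0 | h0 | h0 | h0 <;> rw [h0] <;> norm_num
  -- Σ_{d ∈ D} x d = 3 * N3
  have globx : ∑ d ∈ D, x d = 3 * N3 := by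
    have hswap : ∑ L ∈ F3, (D.filter (fun p => mem p L)).card
        = ∑ d ∈ D, (F3.filter (fun L => mem d L)).card :=
      swap_cnt D F3 (fun d L => mem d L)
    have hval : ∑ L ∈ F3, (D.filter (fun p => mem p L)).card = 3 * N3 := by
      have h1 : ∀ L ∈ F3, (D.filter (fun p => mem p L)).card = 3 := by
        intro L hL
        have h2 : dl L = 3 := by rw [hF3] at hL; simpa using hL
        rw [hdl] at h2
        exact h2
      rw [Finset.sum_congr rfl h1, Finset.sum_const, smul_eq_mul, hN3]
      ring
    rw [← hval, hswap]
  -- x d ≤ 3 for d ∈ D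
  have x_le3 : ∀ d ∈ D, x d ≤ 3 := by
    intro d hd
    have hsum12 : ∑ L ∈ univ.filter (fun L => mem d L), dl L = 12 := by
      have h := key_dl d
      rw [if_pos hd] at h
      exact h
    have h5 : (univ.filter (fun L => mem d L)).card = 5 := hpoint d
    have hxd : x d = ((univ.filter (fun L => mem d L)).filter (fun L => dl L = 3)).card := by
      rw [hx, hF3, Finset.filter_comm]
    have hlow : x d * 3 + (5 - x d) * 1 ≤ 12 := by
      have hxle : x d ≤ 5 := by
        rw [hxd]
        calc ((univ.filter (fun L => mem d L)).filter (fun L => dl L = 3)).card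
            ≤ (univ.filter (fun L => mem d L)).card :=
              Finset.card_le_card (Finset.filter_subset _ _)
          _ = 5 := h5
      have hstep : x d * 3 + (5 - x d) * 1 ≤ ∑ L ∈ univ.filter (fun L => mem d L), dl L := by
        rw [hxd, Finset.card_filter]
        have hrw : (5 - (∑ L ∈ univ.filter (fun L => mem d L), if dl L = 3 then 1 else 0)) * 1
            = ∑ L ∈ univ.filter (fun L => mem d L), (if dl L = 3 then 0 else 1) := by
          have hone : (∑ L ∈ univ.filter (fun L => mem d L), if dl L = 3 then 1 else 0)
              + ∑ L ∈ univ.filter (fun L => mem d L), (if dl L = 3 then 0 else 1)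
              = 5 := by
            rw [← Finset.sum_add_distrib, ← h5, Finset.card_eq_sum_ones]
            apply Finset.sum_congr rfl
            intro L _
            split_ifs <;> omega
          omega
        rw [hrw, Finset.sum_mul, ← Finset.sum_add_distrib]
        apply Finset.sum_le_sum
        intro L hL
        have := dl_pos d hd L (by simpa using hL)
        split_ifs <;> omega
      omega
    omega
  -- 3 * N3 ≤ 16 + m
  have hNm : 3 * N3 ≤ 16 + m := by
    have h1 : ∑ d ∈ D, x d ≤ ∑ d ∈ D, (2 + (if x d = 3 then 1 else 0)) := by
      apply Finset.sum_le_sum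
      intro d hd
      have := x_le3 d hd
      split_ifs <;> omega
    rw [Finset.sum_add_distrib, Finset.sum_const, smul_eq_mul, ← Finset.card_filter] at h1
    rw [hD, globx] at h1
    rw [hm, hDspec]
    omega
  have hm8 : m ≤ 8 := by
    rw [hm, hDspec]
    calc (D.filter (fun d => x d = 3)).card ≤ D.card :=
          Finset.card_le_card (Finset.filter_subset _ _)
      _ = 8 := hD
  -- case m ≥ 5
  by_cases hm5 : 5 ≤ m
  · have h1 : 5 * s ≤ m * s := Nat.mul_le_mul_right s hm5
    have h2 : m * 4 ≤ m * s := Nat.mul_le_mul_left m hs4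
    have h1' : 5 * s ≤ 2 * m + W := le_trans h1 main
    have h2' : m * 4 ≤ 2 * m + W := le_trans h2 main
    omega
  -- case m ≤ 4 : then N3 = 6, N1 = 2
  · have hm4 : m ≤ 4 := by omega
    have hN36' : N3 = 6 ∧ N1 = 2 := by omega
    obtain ⟨hN36, hN12⟩ := hN36'
    have hm2 : 2 ≤ m := by omega
    -- W ≤ 2 : at most one single lies on 1-lines, and it lies on both
    have hW2 : W ≤ 2 := by
      have huniq : ∀ q ∈ S, ∀ q' ∈ S,
          (F1.filter (fun L => mem q L)).card ≠ 0 →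
          (F1.filter (fun L => mem q' L)).card ≠ 0 → q = q' := by
        intro q hq q' hq' h h'
        have hq2 : (F1.filter (fun L => mem q L)).card = 2 := by
          rcases single_lines q hq with h0 | h0
          · omega
          · exact h0
        have hq'2 : (F1.filter (fun L => mem q' L)).card = 2 := by
          rcases single_lines q' hq' with h0 | h0
          · omega
          · exact h0
        have hfull : F1.filter (fun L => mem q L) = F1 :=
          Finset.eq_of_subset_of_card_le (Finset.filter_subset _ _) (by omega)
        have hfull' : F1.filter (fun L => mem q' L) = F1 :=
          Finset.eq_of_subset_of_card_le (Finset.filter_subset _ _) (by omega)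
        obtain ⟨L1, L2, hL12, hF1eq⟩ := Finset.card_eq_two.mp (by omega : F1.card = 2)
        have hmemq : ∀ L ∈ F1, mem q L := by
          intro L hL
          rw [← hfull] at hL
          exact (Finset.mem_filter.mp hL).2
        have hmemq' : ∀ L ∈ F1, mem q' L := by
          intro L hL
          rw [← hfull'] at hL
          exact (Finset.mem_filter.mp hL).2
        have hL1 : L1 ∈ F1 := by rw [hF1eq]; simp
        have hL2 : L2 ∈ F1 := by rw [hF1eq]; simp
        obtain ⟨p0, _, hup⟩ := hmeet L1 L2 hL12
        have e1 : q = p0 := hup q ⟨hmemq L1 hL1, hmemq L2 hL2⟩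
        have e2 : q' = p0 := hup q' ⟨hmemq' L1 hL1, hmemq' L2 hL2⟩
        rw [e1, e2]
      rw [hWsum]
      set G := S.filter (fun q => (F1.filter (fun L => mem q L)).card ≠ 0) with hG
      have hGcard : G.card ≤ 1 := by
        rw [Finset.card_le_one]
        intro a ha b hb
        rw [hG] at ha hb
        exact huniq a (Finset.mem_of_mem_filter a ha) b (Finset.mem_of_mem_filter b hb)
          (Finset.mem_filter.mp ha).2 (Finset.mem_filter.mp hb).2
      have hsumG : ∑ q ∈ S, (F1.filter (fun L => mem q L)).card
          = ∑ q ∈ G, (F1.filter (fun L => mem q L)).card := by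
        rw [hG]
        exact (Finset.sum_filter_ne_zero S).symm
      rw [hsumG]
      calc ∑ q ∈ G, (F1.filter (fun L => mem q L)).card ≤ ∑ q ∈ G, 2 := by
            apply Finset.sum_le_sum
            intro q hq
            have hqS : q ∈ S := by rw [hG] at hq; exact Finset.mem_of_mem_filter q hq
            rcases single_lines q hqS with h0 | h0 <;> omega
        _ = G.card * 2 := by rw [Finset.sum_const, smul_eq_mul]
        _ ≤ 2 := by omega
    -- finish: m * s ≤ 2 * m + 2 with 2 ≤ m ≤ 4 and s ≥ 4
    have hmv : m = 2 ∨ m = 3 ∨ m = 4 := by omega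
    rcases hmv with h | h | h <;> rw [h] at main <;> omega
end

section
/- Let S be an (8,3)-arc in PG(2,4), i.e. a set of 8 points no 4 of which are collinear. Then the number a_3 of lines meeting S in exactly 3 points satisfies 6 ≤ a_3 ≤ 8. -/
open Finset

/-- an `(8,3)`-arc `S` in `PG(2,4)` has between 6 and 8 trisecants. -/
theorem stmt4
    {Point Line : Type} [Fintype Point] [Fintype Line] [DecidableEq Point]
    (mem : Point → Line → Prop) [∀ p L, Decidable (mem p L)]
    (hcardP : Fintype.card Point = 21)
    (hcardL : Fintype.card Line = 21)
    (hline : ∀ L, (univ.filter (fun p => mem p L)).card = 5)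
    (hpoint : ∀ p, (univ.filter (fun L => mem p L)).card = 5)
    (hjoin : ∀ p q : Point, p ≠ q → ∃! L, mem p L ∧ mem q L)
    (hmeet : ∀ L M : Line, L ≠ M → ∃! p, mem p L ∧ mem p M)
    (S : Finset Point) (hS : S.card = 8)
    (harc : ∀ L, (S.filter (fun p => mem p L)).card ≤ 3)
    (a3 : ℕ)
    (ha3 : a3 = (univ.filter (fun L => (S.filter (fun p => mem p L)).card = 3)).card) :
    6 ≤ a3 ∧ a3 ≤ 8 := by
  classical
  set f : Line → ℕ := fun L => (S.filter (fun p => mem p L)).card with hf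
  -- unique join line has exactly one line
  have hjoin1 : ∀ p q : Point, p ≠ q →
      (univ.filter (fun L => mem p L ∧ mem q L)).card = 1 := by
    intro p q h
    obtain ⟨L0, hL0, huniq⟩ := hjoin p q h
    rw [Finset.card_eq_one]
    refine ⟨L0, ?_⟩
    ext M
    simp only [mem_filter, mem_univ, true_and, mem_singleton]
    exact ⟨fun h' => huniq M h', fun h' => h' ▸ hL0⟩
  -- (A) total incidence count
  have hA : ∑ L : Line, f L = 40 := by
    have h1 : ∀ L : Line, f L = ∑ p ∈ S, (if mem p L then 1 else 0) := by
      intro L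
      show (S.filter (fun p => mem p L)).card = _
      rw [Finset.card_filter]
    calc ∑ L : Line, f L
        = ∑ L : Line, ∑ p ∈ S, (if mem p L then 1 else 0) := by
          exact Finset.sum_congr rfl fun L _ => h1 L
      _ = ∑ p ∈ S, ∑ L : Line, (if mem p L then 1 else 0) := Finset.sum_comm
      _ = ∑ p ∈ S, (univ.filter (fun L => mem p L)).card := by
          refine Finset.sum_congr rfl fun p _ => ?_
          rw [Finset.card_filter]
      _ = ∑ p ∈ S, 5 := Finset.sum_congr rfl fun p _ => hpoint p
      _ = 40 := by simp [hS]
  -- (B) ordered-pair count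
  have hB : ∑ L : Line, (f L * f L - f L) = 56 := by
    have h1 : ∀ L : Line, f L * f L - f L =
        (S.offDiag.filter (fun x => mem x.1 L ∧ mem x.2 L)).card := by
      intro L
      have : (S.filter (fun p => mem p L)).offDiag
          = S.offDiag.filter (fun x => mem x.1 L ∧ mem x.2 L) := by
        ext ⟨a, b⟩
        simp only [Finset.mem_offDiag, Finset.mem_filter]
        tauto
      rw [hf]
      calc (S.filter (fun p => mem p L)).card * (S.filter (fun p => mem p L)).card
            - (S.filter (fun p => mem p L)).card
          = (S.filter (fun p => mem p L)).offDiag.card := (Finset.offDiag_card _).symm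
        _ = _ := by rw [this]
    calc ∑ L : Line, (f L * f L - f L)
        = ∑ L : Line, ∑ x ∈ S.offDiag, (if mem x.1 L ∧ mem x.2 L then 1 else 0) := by
          refine Finset.sum_congr rfl fun L _ => ?_
          rw [h1 L, Finset.card_filter]
      _ = ∑ x ∈ S.offDiag, ∑ L : Line, (if mem x.1 L ∧ mem x.2 L then 1 else 0) :=
          Finset.sum_comm
      _ = ∑ x ∈ S.offDiag, (univ.filter (fun L => mem x.1 L ∧ mem x.2 L)).card := by
          refine Finset.sum_congr rfl fun x _ => ?_
          rw [Finset.card_filter]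
      _ = ∑ x ∈ S.offDiag, 1 := by
          refine Finset.sum_congr rfl fun x hx => ?_
          exact hjoin1 x.1 x.2 (Finset.mem_offDiag.1 hx).2.2
      _ = 56 := by
          rw [Finset.sum_const, smul_eq_mul, mul_one, Finset.offDiag_card, hS]
  -- fiberwise decomposition
  set n : ℕ → ℕ := fun i => (univ.filter (fun L => f L = i)).card with hn
  have hmaps : ∀ L ∈ (univ : Finset Line), f L ∈ Finset.range 4 := by
    intro L _
    exact Finset.mem_range.2 (Nat.lt_succ_of_le (harc L))
  have hfiber1 : ∀ i, ∑ L ∈ univ.filter (fun L => f L = i), f L = i * n i := by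
    intro i
    show _ = i * (univ.filter (fun L => f L = i)).card
    calc ∑ L ∈ univ.filter (fun L => f L = i), f L
        = ∑ L ∈ univ.filter (fun L => f L = i), i := by
          refine Finset.sum_congr rfl fun L hL => ?_
          exact (Finset.mem_filter.1 hL).2
      _ = i * (univ.filter (fun L => f L = i)).card := by
          rw [Finset.sum_const, smul_eq_mul, mul_comm]
  have hfib1 : ∑ i ∈ Finset.range 4, i * n i = 40 := by
    rw [← hA, ← Finset.sum_fiberwise_of_maps_to hmaps f]
    exact Finset.sum_congr rfl fun i _ => (hfiber1 i).symm
  have hfiber2 : ∀ i, ∑ L ∈ univ.filter (fun L => f L = i), (f L * f L - f L)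
      = (i * i - i) * n i := by
    intro i
    show _ = (i * i - i) * (univ.filter (fun L => f L = i)).card
    calc ∑ L ∈ univ.filter (fun L => f L = i), (f L * f L - f L)
        = ∑ L ∈ univ.filter (fun L => f L = i), (i * i - i) := by
          refine Finset.sum_congr rfl fun L hL => ?_
          rw [(Finset.mem_filter.1 hL).2]
      _ = (i * i - i) * (univ.filter (fun L => f L = i)).card := by
          rw [Finset.sum_const, smul_eq_mul, mul_comm]
  have hfib2 : ∑ i ∈ Finset.range 4, (i * i - i) * n i = 56 := by
    rw [← hB, ← Finset.sum_fiberwise_of_maps_to hmaps (fun L => f L * f L - f L)]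
    exact Finset.sum_congr rfl fun i _ => (hfiber2 i).symm
  have ha3n : a3 = n 3 := ha3
  have he1 : n 1 + 2 * n 2 + 3 * n 3 = 40 := by
    have := hfib1
    simp [Finset.sum_range_succ] at this
    omega
  have he2 : 2 * n 2 + 6 * n 3 = 56 := by
    have := hfib2
    simp [Finset.sum_range_succ] at this
    omega
  -- upper bound: each point of S lies on at most 3 trisecants
  set t3 : Point → ℕ :=
    fun p => ((univ.filter (fun L => mem p L)).filter (fun L => f L = 3)).card with ht3
  have hC : ∀ p ∈ S, ∑ L ∈ univ.filter (fun L => mem p L), f L = 12 := by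
    intro p hp
    calc ∑ L ∈ univ.filter (fun L => mem p L), f L
        = ∑ L ∈ univ.filter (fun L => mem p L), ∑ q ∈ S, (if mem q L then 1 else 0) := by
          refine Finset.sum_congr rfl fun L _ => ?_
          show (S.filter (fun q => mem q L)).card = _
          rw [Finset.card_filter]
      _ = ∑ q ∈ S, ∑ L ∈ univ.filter (fun L => mem p L), (if mem q L then 1 else 0) :=
          Finset.sum_comm
      _ = ∑ q ∈ S, (univ.filter (fun L => mem p L ∧ mem q L)).card := by
          refine Finset.sum_congr rfl fun q _ => ?_
          rw [Finset.sum_filter, Finset.card_filter]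
          refine Finset.sum_congr rfl fun L _ => ?_
          by_cases h1 : mem p L <;> by_cases h2 : mem q L <;> simp [h1, h2]
      _ = ∑ q ∈ S, (if q = p then 5 else 1) := by
          refine Finset.sum_congr rfl fun q hq => ?_
          by_cases h : q = p
          · subst h
            simp only [if_pos rfl, and_self]
            exact hpoint q
          · rw [if_neg h]
            exact hjoin1 p q (fun hpq => h hpq.symm)
      _ = ∑ q ∈ S, ((if q = p then 4 else 0) + 1) := by
          refine Finset.sum_congr rfl fun q _ => ?_
          by_cases h : q = p <;> simp [h]
      _ = 12 := by
          rw [Finset.sum_add_distrib, Finset.sum_ite_eq' S p (fun _ => 4)]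
          simp [hp, hS]
  have ht3le : ∀ p ∈ S, t3 p ≤ 3 := by
    intro p hp
    set s := univ.filter (fun L => mem p L) with hs
    have hscard : s.card = 5 := hpoint p
    have hsplit : (s.filter (fun L => f L = 3)).card
        + (s.filter (fun L => ¬ f L = 3)).card = 5 := by
      rw [Finset.card_filter_add_card_filter_not, hscard]
    have hsum3 : ∑ L ∈ s.filter (fun L => f L = 3), f L
        = 3 * (s.filter (fun L => f L = 3)).card := by
      calc ∑ L ∈ s.filter (fun L => f L = 3), f L
          = ∑ L ∈ s.filter (fun L => f L = 3), 3 := by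
            refine Finset.sum_congr rfl fun L hL => (Finset.mem_filter.1 hL).2
        _ = _ := by rw [Finset.sum_const, smul_eq_mul, mul_comm]
    have hsumrest : (s.filter (fun L => ¬ f L = 3)).card
        ≤ ∑ L ∈ s.filter (fun L => ¬ f L = 3), f L := by
      have : ∀ L ∈ s.filter (fun L => ¬ f L = 3), 1 ≤ f L := by
        intro L hL
        have hmemL : mem p L := by
          have := (Finset.mem_filter.1 (Finset.mem_filter.1 hL).1).2
          exact this
        have : p ∈ S.filter (fun q => mem q L) := Finset.mem_filter.2 ⟨hp, hmemL⟩
        exact Finset.card_pos.2 ⟨p, this⟩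
      calc (s.filter (fun L => ¬ f L = 3)).card
          = ∑ L ∈ s.filter (fun L => ¬ f L = 3), 1 := by
            rw [Finset.sum_const, smul_eq_mul, mul_one]
        _ ≤ _ := Finset.sum_le_sum this
    have htot : ∑ L ∈ s.filter (fun L => f L = 3), f L
        + ∑ L ∈ s.filter (fun L => ¬ f L = 3), f L = 12 := by
      rw [Finset.sum_filter_add_sum_filter_not]
      exact hC p hp
    show (s.filter (fun L => f L = 3)).card ≤ 3
    omega
  have hD : ∑ p ∈ S, t3 p = 3 * n 3 := by
    calc ∑ p ∈ S, t3 p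
        = ∑ p ∈ S, ∑ L : Line, (if mem p L ∧ f L = 3 then 1 else 0) := by
          refine Finset.sum_congr rfl fun p _ => ?_
          show ((univ.filter (fun L => mem p L)).filter (fun L => f L = 3)).card = _
          rw [Finset.filter_filter, Finset.card_filter]
      _ = ∑ L : Line, ∑ p ∈ S, (if mem p L ∧ f L = 3 then 1 else 0) := Finset.sum_comm
      _ = ∑ L : Line, (if f L = 3 then f L else 0) := by
          refine Finset.sum_congr rfl fun L _ => ?_
          by_cases h : f L = 3
          · rw [if_pos h]
            simp only [h, and_true]
            rw [← Finset.card_filter]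
            exact h
          · rw [if_neg h]
            simp [h]
      _ = ∑ L ∈ univ.filter (fun L => f L = 3), f L := by
          rw [Finset.sum_filter]
      _ = 3 * n 3 := by
          rw [hn]
          calc ∑ L ∈ univ.filter (fun L => f L = 3), f L
              = ∑ L ∈ univ.filter (fun L => f L = 3), 3 := by
                refine Finset.sum_congr rfl fun L hL => (Finset.mem_filter.1 hL).2
            _ = _ := by rw [Finset.sum_const, smul_eq_mul, mul_comm]
  have hUB : 3 * n 3 ≤ 24 := by
    rw [← hD]
    calc ∑ p ∈ S, t3 p ≤ ∑ p ∈ S, 3 := Finset.sum_le_sum ht3le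
      _ = 24 := by rw [Finset.sum_const, smul_eq_mul, hS]
  omega
end

section
/- For every prime power q and every integer s with 1 ≤ s ≤ q, the union F of s parallel lines in AG(2,q) satisfies: every transversal T (one line from each parallel class) has Σ_{L∈T} |F ∩ L| ≤ sq + q, and some transversal attains this value; hence ℓ_q(sq) ≤ sq + q. -/
open Finset

/-- The value `F(T)` of a point set `F` in `AG(2,q)` on the transversal `T`
consisting of the line of slope `m` and `y`-intercept `f m` for each slope `m`,
together with the vertical line `x = c`. -/
def transSum {K : Type*} [Field K] [Fintype K] [DecidableEq K]
    (F : Finset (K × K)) (f : K → K) (c : K) : ℕ :=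
  (∑ m : K, (F.filter (fun p => p.2 = m * p.1 + f m)).card) +
    (F.filter (fun p => p.1 = c)).card

section Aux

variable {K : Type*} [Field K] [Fintype K] [DecidableEq K]

lemma memF (m : K) (B : Finset K) (F : Finset (K × K))
    (hF : F = univ.filter (fun p : K × K => ∃ b ∈ B, p.2 = m * p.1 + b)) :
    ∀ p : K × K, p ∈ F ↔ p.2 - m * p.1 ∈ B := by
  intro p
  simp only [hF, mem_filter, mem_univ, true_and]
  constructor
  · rintro ⟨b, hb, h⟩
    have : p.2 - m * p.1 = b := by rw [h]; ring
    rwa [this]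
  · intro h
    exact ⟨_, h, by ring⟩

lemma cardSlope (m : K) (B : Finset K) (F : Finset (K × K))
    (hF : F = univ.filter (fun p : K × K => ∃ b ∈ B, p.2 = m * p.1 + b))
    (m' d : K) (hm' : m' ≠ m) :
    (F.filter fun p => p.2 = m' * p.1 + d).card = B.card := by
  have h0 : m - m' ≠ 0 := sub_ne_zero.mpr (Ne.symm hm')
  apply Finset.card_bij' (fun p _ => p.2 - m * p.1)
    (fun b _ => ((d - b) / (m - m'), m' * ((d - b) / (m - m')) + d))
  · intro p hp
    rw [mem_filter] at hp
    exact (memF m B F hF p).mp hp.1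
  · intro b hb
    rw [mem_filter]
    refine ⟨(memF m B F hF _).mpr ?_, rfl⟩
    have : m' * ((d - b) / (m - m')) + d - m * ((d - b) / (m - m')) = b := by
      field_simp
      ring
    rwa [this]
  · intro p hp
    rw [mem_filter] at hp
    have h2 := hp.2
    have hx : (d - (p.2 - m * p.1)) / (m - m') = p.1 := by
      rw [h2]; field_simp; ring
    ext
    · exact hx
    · simp only [hx]; rw [h2]
  · intro b hb
    have : m' * ((d - b) / (m - m')) + d - m * ((d - b) / (m - m')) = b := by
      field_simp; ring
    exact this

lemma cardVert (m : K) (B : Finset K) (F : Finset (K × K))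
    (hF : F = univ.filter (fun p : K × K => ∃ b ∈ B, p.2 = m * p.1 + b))
    (c : K) :
    (F.filter fun p => p.1 = c).card = B.card := by
  apply Finset.card_bij' (fun p _ => p.2 - m * p.1) (fun b _ => (c, m * c + b))
  · intro p hp
    rw [mem_filter] at hp
    exact (memF m B F hF p).mp hp.1
  · intro b hb
    rw [mem_filter]
    refine ⟨(memF m B F hF _).mpr ?_, rfl⟩
    simpa using hb
  · intro p hp
    rw [mem_filter] at hp
    ext
    · exact hp.2.symm
    · show m * c + (p.2 - m * p.1) = p.2
      rw [← hp.2]; ring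
  · intro b hb
    simp

lemma cardSame (m : K) (B : Finset K) (F : Finset (K × K))
    (hF : F = univ.filter (fun p : K × K => ∃ b ∈ B, p.2 = m * p.1 + b))
    (d : K) :
    (F.filter fun p => p.2 = m * p.1 + d).card =
      if d ∈ B then Fintype.card K else 0 := by
  split_ifs with hd
  · have : (F.filter fun p => p.2 = m * p.1 + d) =
        (univ : Finset K).image (fun x => (x, m * x + d)) := by
      ext p
      simp only [mem_filter, mem_image, mem_univ, true_and]
      constructor
      · rintro ⟨_, h⟩
        exact ⟨p.1, by rw [← h]⟩
      · rintro ⟨x, rfl⟩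
        exact ⟨(memF m B F hF _).mpr (by simpa using hd), rfl⟩
    rw [this, Finset.card_image_of_injective _ (fun a b h => (Prod.mk.injEq _ _ _ _ ▸ h).1),
      card_univ]
  · rw [Finset.filter_eq_empty_iff.mpr, card_empty]
    intro p hp h
    have := (memF m B F hF p).mp hp
    have hd' : p.2 - m * p.1 = d := by rw [h]; ring
    rw [hd'] at this
    exact hd this

end Aux

/-- the union `F` of `s` parallel lines (here, `s` lines of a common
slope `m`) has `F.card = s*q`, every transversal `T` has `F(T) ≤ sq + q`, and some
transversal attains this value; hence `ℓ_q(sq) ≤ sq + q`. -/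
theorem stmt6 {K : Type*} [Field K] [Fintype K] [DecidableEq K]
    (q s : ℕ) (hq : q = Fintype.card K) (hs1 : 1 ≤ s) (hs2 : s ≤ q)
    (m : K) (B : Finset K) (hB : B.card = s)
    (F : Finset (K × K))
    (hF : F = univ.filter (fun p : K × K => ∃ b ∈ B, p.2 = m * p.1 + b)) :
    F.card = s * q ∧
    (∀ (f : K → K) (c : K), transSum F f c ≤ s * q + q) ∧
    (∃ (f : K → K) (c : K), transSum F f c = s * q + q) := by
  have hq1 : 1 ≤ q := hs1.trans hs2
  -- card of F
  have hcardF : F.card = s * q := by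
    have himg : F = (B ×ˢ (univ : Finset K)).image (fun bp => (bp.2, m * bp.2 + bp.1)) := by
      ext p
      rw [memF m B F hF]
      simp only [mem_image, mem_product, mem_univ, and_true]
      constructor
      · intro h
        exact ⟨(p.2 - m * p.1, p.1), h, by ext <;> simp⟩
      · rintro ⟨bp, hbp, rfl⟩
        simpa using hbp
    rw [himg, Finset.card_image_of_injective, Finset.card_product, hB, card_univ, hq]
    intro a b h
    simp only [Prod.mk.injEq] at h
    obtain ⟨h1, h2⟩ := h
    rw [h1] at h2
    have : a.1 = b.1 := by linear_combination h2
    exact Prod.ext this h1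
  -- value of transSum
  have hval : ∀ (f : K → K) (c : K),
      transSum F f c = (q - 1) * s + (if f m ∈ B then q else 0) + s := by
    intro f c
    unfold transSum
    rw [cardVert m B F hF c, hB]
    congr 1
    rw [← Finset.add_sum_erase _ _ (mem_univ m), cardSame m B F hF (f m), ← hq]
    rw [Finset.sum_congr rfl (fun m' hm' => cardSlope m B F hF m' (f m') (mem_erase.mp hm').1),
      Finset.sum_const, hB, card_erase_of_mem (mem_univ m), card_univ, ← hq, smul_eq_mul]
    ring
  have hqs : (q - 1) * s + s = s * q := by
    cases q with
    | zero => omega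
    | succ n => simp [Nat.succ_sub_one]; ring
  refine ⟨hcardF, ?_, ?_⟩
  · intro f c
    rw [hval f c]
    have : (if f m ∈ B then q else 0) ≤ q := by split_ifs <;> omega
    omega
  · have hBne : B.Nonempty := by rw [← Finset.card_pos, hB]; exact hs1
    obtain ⟨b0, hb0⟩ := hBne
    refine ⟨fun _ => b0, 0, ?_⟩
    rw [hval _ 0, if_pos hb0]
    omega
end

section
/- Suppose K is a point set in PHG(2,R) over a chain ring R with |R| = q^2 and residue field F_q such that every point has K-multiplicity in {0,1}, every point neighbour class has K-multiplicity exactly 6 where q = 4 (so |K| = 126), and every line has K-multiplicity in {0, 8}. Then the number of lines of multiplicity 8 is 315 and the number of lines of multiplicity 0 is 21, and the 0-lines form a (21,2)-arc in the dual plane. -/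
open Finset

private lemma dc17 {α β : Type*} (T : Finset α) (K : Finset β) (R : β → α → Prop)
    [∀ p L, Decidable (R p L)] :
    ∑ L ∈ T, (K.filter (fun p => R p L)).card = ∑ p ∈ K, (T.filter (fun L => R p L)).card := by
  simp only [Finset.card_filter]
  exact Finset.sum_comm

private lemma split08 {α : Type*} (T : Finset α) (f : α → ℕ)
    (hf : ∀ L ∈ T, f L = 0 ∨ f L = 8) :
    (T.filter (fun L => f L = 8)).card + (T.filter (fun L => f L = 0)).card = T.card ∧
    ∑ L ∈ T, f L = 8 * (T.filter (fun L => f L = 8)).card := by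
  classical
  constructor
  · have he : T.filter (fun L => f L = 0) = T.filter (fun L => ¬ f L = 8) := by
      apply Finset.filter_congr
      intro L hL
      rcases hf L hL with h | h <;> simp [h]
    rw [he, Finset.card_filter_add_card_filter_not]
  · rw [← Finset.sum_filter_add_sum_filter_not T (fun L => f L = 8)]
    rw [Finset.sum_congr rfl (fun L hL => (Finset.mem_filter.mp hL).2)]
    rw [Finset.sum_const, smul_eq_mul, mul_comm]
    have h0 : ∑ L ∈ T.filter (fun L => ¬ f L = 8), f L = 0 :=
      Finset.sum_eq_zero fun L hL => by
        rcases hf L (Finset.mem_filter.mp hL).1 with h | h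
        · exact h
        · exact absurd h (Finset.mem_filter.mp hL).2
    omega

/-- in `PHG(2,R)` with `|R| = 16`, `q = 4` (336 points in 21
neighbour classes of 16 points, 336 lines of 20 points, 20 lines per point; two
distinct points lie on 4 common lines if they are neighbours and on 1 otherwise),
a point set `K` with exactly 6 points in every neighbour class (so `|K| = 126`)
meeting every line in 0 or 8 points has exactly 315 eight-lines and 21 passants,
and the passants form a `(21,2)`-arc in the dual plane (at most 2 through each
point). -/
theorem stmt17
    {Point Line : Type} [Fintype Point] [Fintype Line]
    (mem : Point → Line → Prop) [∀ p L, Decidable (mem p L)]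
    (hP : Fintype.card Point = 336) (hL : Fintype.card Line = 336)
    (hline : ∀ L, (univ.filter (fun p => mem p L)).card = 20)
    (hpoint : ∀ p, (univ.filter (fun L => mem p L)).card = 20)
    (N : Point → Fin 21)
    (hclass : ∀ c, (univ.filter (fun p => N p = c)).card = 16)
    (hpair : ∀ p p' : Point, p ≠ p' →
      (univ.filter (fun L => mem p L ∧ mem p' L)).card =
        if N p = N p' then 4 else 1)
    (K : Finset Point)
    (hK6 : ∀ c, (K.filter (fun p => N p = c)).card = 6)
    (hline08 : ∀ L, (K.filter (fun p => mem p L)).card = 0 ∨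
      (K.filter (fun p => mem p L)).card = 8) :
    (univ.filter (fun L => (K.filter (fun p => mem p L)).card = 8)).card = 315 ∧
    (univ.filter (fun L => (K.filter (fun p => mem p L)).card = 0)).card = 21 ∧
    (∀ p : Point,
      (univ.filter (fun L => mem p L ∧
        (K.filter (fun p' => mem p' L)).card = 0)).card ≤ 2) := by
  classical
  have hKcard : K.card = 126 := by
    have h := Finset.card_eq_sum_card_fiberwise (f := N) (s := K)
      (t := (univ : Finset (Fin 21))) (fun x _ => mem_univ _)
    rw [h]
    simp [hK6]
  have hsum : ∑ L ∈ (univ : Finset Line), (K.filter (fun p => mem p L)).card = 2520 := by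
    rw [dc17]
    rw [Finset.sum_congr rfl (fun p _ => hpoint p), Finset.sum_const, hKcard]
    norm_num
  obtain ⟨hEZ, hSE⟩ := split08 (univ : Finset Line)
    (fun L => (K.filter (fun p => mem p L)).card) (fun L _ => hline08 L)
  rw [hsum] at hSE
  have hcardU : (univ : Finset Line).card = 336 := by rw [Finset.card_univ, hL]
  have hE : (univ.filter (fun L => (K.filter (fun p => mem p L)).card = 8)).card = 315 := by
    omega
  refine ⟨hE, by omega, ?_⟩
  intro p
  by_cases hpK : p ∈ K
  · have hempty : univ.filter (fun L => mem p L ∧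
        (K.filter (fun p' => mem p' L)).card = 0) = ∅ := by
      ext L
      simp only [mem_filter, mem_univ, true_and, Finset.notMem_empty, iff_false, not_and]
      intro hm hc
      have hmem : p ∈ K.filter (fun p' => mem p' L) := mem_filter.mpr ⟨hpK, hm⟩
      rw [Finset.card_eq_zero] at hc
      simp [hc] at hmem
    rw [hempty]
    simp
  · set S := univ.filter (fun L => mem p L) with hS
    have hScard : S.card = 20 := hpoint p
    have hsum2 : ∑ L ∈ S, (K.filter (fun p' => mem p' L)).card = 144 := by
      rw [dc17]
      have hval : ∀ p' ∈ K, (S.filter (fun L => mem p' L)).card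
          = if N p' = N p then 4 else 1 := by
        intro p' hp'
        have hne : p ≠ p' := fun h => hpK (h ▸ hp')
        have heq : S.filter (fun L => mem p' L)
            = univ.filter (fun L => mem p L ∧ mem p' L) := by
          rw [hS, Finset.filter_filter]
        rw [heq, hpair p p' hne]
        by_cases h : N p = N p'
        · rw [if_pos h, if_pos h.symm]
        · rw [if_neg h, if_neg (fun hh => h hh.symm)]
      rw [Finset.sum_congr rfl hval, Finset.sum_ite, Finset.sum_const, Finset.sum_const]
      have h6 := hK6 (N p)
      have hfc := Finset.card_filter_add_card_filter_not (s := K)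
        (p := fun p' => N p' = N p)
      simp only [smul_eq_mul, mul_one]
      omega
    obtain ⟨hEZ2, hSE2⟩ := split08 S (fun L => (K.filter (fun p' => mem p' L)).card)
      (fun L _ => hline08 L)
    rw [hsum2] at hSE2
    have hrw : univ.filter (fun L => mem p L ∧ (K.filter (fun p' => mem p' L)).card = 0)
        = S.filter (fun L => (K.filter (fun p' => mem p' L)).card = 0) := by
      rw [hS, Finset.filter_filter]
    rw [hrw]
    omega
end

section
/- Let K be a multiset on the 21 points of PG(2,4) with all multiplicities in {0,1,2}, total size 22, and every line of multiplicity at most 6. Then the number D of points of multiplicity 2 satisfies 1 ≤ D ≤ 7. -/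
open Finset

private lemma card_filter_unique {Line : Type} [Fintype Line] {P : Line → Prop} [DecidablePred P]
    (h : ∃! L, P L) : (univ.filter P).card = 1 := by
  obtain ⟨L0, h0, hu⟩ := h
  rw [Finset.card_eq_one]
  refine ⟨L0, ?_⟩
  ext M
  simp only [Finset.mem_filter, Finset.mem_univ, true_and, Finset.mem_singleton]
  exact ⟨fun h => hu M h, fun h => h ▸ h0⟩

private lemma swapW {Point Line : Type} [Fintype Point]
    (mem : Point → Line → Prop) [∀ p L, Decidable (mem p L)]
    (A : Finset Line) (f : Point → ℕ) :
    ∑ L ∈ A, ∑ p ∈ univ.filter (fun p => mem p L), f p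
      = ∑ p : Point, f p * (A.filter (fun L => mem p L)).card := by
  calc ∑ L ∈ A, ∑ p ∈ univ.filter (fun p => mem p L), f p
      = ∑ L ∈ A, ∑ p : Point, if mem p L then f p else 0 := by
        refine Finset.sum_congr rfl fun L _ => ?_
        rw [Finset.sum_filter]
    _ = ∑ p : Point, ∑ L ∈ A, if mem p L then f p else 0 := Finset.sum_comm
    _ = _ := by
        refine Finset.sum_congr rfl fun p _ => ?_
        rw [← Finset.sum_filter, Finset.sum_const, smul_eq_mul, mul_comm]

private lemma swapC {Point Line : Type} [Fintype Point]
    (mem : Point → Line → Prop) [∀ p L, Decidable (mem p L)]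
    (A : Finset Line) (pr : Point → Prop) [DecidablePred pr] :
    ∑ L ∈ A, (univ.filter (fun p => pr p ∧ mem p L)).card
      = ∑ p ∈ univ.filter pr, (A.filter (fun L => mem p L)).card := by
  calc ∑ L ∈ A, (univ.filter (fun p => pr p ∧ mem p L)).card
      = ∑ L ∈ A, ∑ p : Point, if pr p ∧ mem p L then 1 else 0 := by
        refine Finset.sum_congr rfl fun L _ => ?_
        rw [Finset.card_filter]
    _ = ∑ p : Point, ∑ L ∈ A, if pr p ∧ mem p L then 1 else 0 := Finset.sum_comm
    _ = _ := by
        rw [Finset.sum_filter]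
        refine Finset.sum_congr rfl fun p _ => ?_
        by_cases hp : pr p
        · simp only [hp, true_and, if_pos]
          rw [← Finset.sum_filter, Finset.sum_const, smul_eq_mul, mul_one]
        · simp [hp]

private lemma all_eq_six {Line : Type} {s : Finset Line} {f : Line → ℕ}
    (h : ∀ L ∈ s, f L ≤ 6) (htot : ∑ L ∈ s, f L = 6 * s.card) :
    ∀ L ∈ s, f L = 6 := by
  intro L hL
  by_contra hne
  have hlt : ∑ M ∈ s, f M < ∑ M ∈ s, 6 :=
    Finset.sum_lt_sum h ⟨L, hL, lt_of_le_of_ne (h L hL) hne⟩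
  rw [Finset.sum_const, smul_eq_mul, mul_comm] at hlt
  omega

/-- a `(22,6)`-arc in `PG(2,4)` (multiset with multiplicities in
`{0,1,2}`, total 22, every line of multiplicity at most 6) has between 1 and 7
double points. -/
theorem stmt18
    {Point Line : Type} [Fintype Point] [Fintype Line]
    (mem : Point → Line → Prop) [∀ p L, Decidable (mem p L)]
    (hcardP : Fintype.card Point = 21)
    (hcardL : Fintype.card Line = 21)
    (hline : ∀ L, (univ.filter (fun p => mem p L)).card = 5)
    (hpoint : ∀ p, (univ.filter (fun L => mem p L)).card = 5)
    (hjoin : ∀ p q : Point, p ≠ q → ∃! L, mem p L ∧ mem q L)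
    (hmeet : ∀ L M : Line, L ≠ M → ∃! p, mem p L ∧ mem p M)
    (K : Point → ℕ)
    (hmult : ∀ p, K p ≤ 2)
    (htotal : ∑ p, K p = 22)
    (harc : ∀ L, ∑ p ∈ univ.filter (fun p => mem p L), K p ≤ 6)
    (D : ℕ) (hD : D = (univ.filter (fun p => K p = 2)).card) :
    1 ≤ D ∧ D ≤ 7 := by
  classical
  -- notation
  set W : Finset Point := univ.filter (fun p => K p = 2) with hWdef
  set Z : Finset Point := univ.filter (fun p => K p = 0) with hZdef
  -- lower bound
  have hlower : 1 ≤ D := by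
    rcases Nat.eq_zero_or_pos D with h0 | h
    · exfalso
      have hall : ∀ p, K p ≤ 1 := by
        intro p
        have h2 := hmult p
        rcases Nat.lt_or_ge (K p) 2 with h' | h'
        · omega
        · exfalso
          have hp2 : K p = 2 := le_antisymm h2 h'
          have hpW : p ∈ W := by simp [hWdef, hp2]
          have := Finset.card_pos.mpr ⟨p, hpW⟩
          omega
      have h21 : (22:ℕ) ≤ 21 := by
        calc (22:ℕ) = ∑ p, K p := htotal.symm
          _ ≤ ∑ _p : Point, 1 := Finset.sum_le_sum fun p _ => hall p
          _ = Fintype.card Point := by simp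
          _ = 21 := hcardP
      omega
    · exact h
  refine ⟨hlower, ?_⟩
  by_contra hcon
  have hD8 : 8 ≤ D := by omega
  -- partition counts on a line
  have hsplit5 : ∀ L : Line,
      (univ.filter fun p => K p = 2 ∧ mem p L).card
      + (univ.filter fun p => K p = 1 ∧ mem p L).card
      + (univ.filter fun p => K p = 0 ∧ mem p L).card = 5 := by
    intro L
    rw [← hline L, Finset.card_filter, Finset.card_filter, Finset.card_filter,
      Finset.card_filter, ← Finset.sum_add_distrib, ← Finset.sum_add_distrib]
    refine Finset.sum_congr rfl fun p _ => ?_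
    have := hmult p
    by_cases hm : mem p L
    · simp only [hm, and_true, if_pos]
      split_ifs <;> omega
    · simp [hm]
  have hsum2 : ∀ L : Line,
      ∑ p ∈ univ.filter (fun p => mem p L), K p
      = 2 * (univ.filter fun p => K p = 2 ∧ mem p L).card
        + (univ.filter fun p => K p = 1 ∧ mem p L).card := by
    intro L
    rw [Finset.sum_filter, Finset.card_filter, Finset.card_filter, Finset.mul_sum,
      ← Finset.sum_add_distrib]
    refine Finset.sum_congr rfl fun p _ => ?_
    have := hmult p
    by_cases hm : mem p L
    · simp only [hm, and_true, if_pos]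
      split_ifs <;> omega
    · simp [hm]
  -- global partition
  have hpartition : W.card + (univ.filter fun p => K p = 1).card + Z.card = 21 := by
    rw [hWdef, hZdef, ← hcardP, ← Finset.card_univ, Finset.card_filter, Finset.card_filter,
      Finset.card_filter, ← Finset.sum_add_distrib, ← Finset.sum_add_distrib,
      Finset.card_eq_sum_ones]
    refine Finset.sum_congr rfl fun p _ => ?_
    have := hmult p
    split_ifs <;> omega
  have hsumglobal : 2 * W.card + (univ.filter fun p => K p = 1).card = 22 := by
    rw [← htotal, hWdef, Finset.card_filter, Finset.card_filter, Finset.mul_sum,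
      ← Finset.sum_add_distrib]
    refine Finset.sum_congr rfl fun p _ => ?_
    have := hmult p
    split_ifs <;> omega
  have hWZ : W.card = Z.card + 1 := by omega
  have hDW : D = W.card := hD
  -- every line through a double point has sum 6
  have hfull : ∀ p, K p = 2 → ∀ L, mem p L →
      ∑ r ∈ univ.filter (fun r => mem r L), K r = 6 := by
    intro p hp
    have h30 : ∑ L ∈ univ.filter (fun L => mem p L),
        ∑ r ∈ univ.filter (fun r => mem r L), K r = 30 := by
      rw [swapW mem _ K]
      have hc : ∀ r : Point,
          ((univ.filter (fun L => mem p L)).filter (fun L => mem r L)).card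
            = if r = p then 5 else 1 := by
        intro r
        by_cases hr : r = p
        · subst hr
          rw [if_pos rfl, Finset.filter_filter]
          simpa using hpoint r
        · rw [if_neg hr, Finset.filter_filter]
          exact card_filter_unique (hjoin p r (fun h => hr h.symm))
      calc ∑ r : Point, K r * ((univ.filter (fun L => mem p L)).filter (fun L => mem r L)).card
          = ∑ r : Point, K r * (if r = p then 5 else 1) := by
            refine Finset.sum_congr rfl fun r _ => by rw [hc r]
        _ = K p * 5 + ∑ r ∈ univ.erase p, K r * (if r = p then 5 else 1) := by
            rw [← Finset.add_sum_erase _ _ (Finset.mem_univ p), if_pos rfl]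
        _ = K p * 5 + ∑ r ∈ univ.erase p, K r := by
            congr 1
            refine Finset.sum_congr rfl fun r hr => ?_
            rw [if_neg (Finset.mem_erase.mp hr).1, mul_one]
        _ = 30 := by
            have := Finset.add_sum_erase univ K (Finset.mem_univ p)
            rw [htotal] at this
            omega
    intro L hL
    have h5 : (univ.filter (fun L => mem p L)).card = 5 := hpoint p
    refine all_eq_six (fun M _ => harc M) ?_ L (Finset.mem_filter.mpr ⟨Finset.mem_univ L, hL⟩)
    rw [h5]
    exact h30
  -- on lines containing a double, #doubles = #zeros + 1
  have hdz : ∀ L : Line, (univ.filter fun p => K p = 2 ∧ mem p L).card ≠ 0 →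
      (univ.filter fun p => K p = 2 ∧ mem p L).card
        = (univ.filter fun p => K p = 0 ∧ mem p L).card + 1 := by
    intro L hpos
    obtain ⟨p, hp⟩ := Finset.card_pos.mp (Nat.pos_of_ne_zero hpos)
    rw [Finset.mem_filter] at hp
    have h6 := hfull p hp.2.1 L hp.2.2
    have h5 := hsplit5 L
    have h2 := hsum2 L
    omega
  -- zero lines
  set N0 : Finset Line := univ.filter (fun L => (univ.filter fun p => K p = 2 ∧ mem p L).card = 0)
    with hN0def
  -- per zero point: at least 2 double-free lines through it
  have hperzero : ∀ q ∈ Z, 2 ≤ (N0.filter (fun L => mem q L)).card := by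
    intro q hqZ
    have hq : K q = 0 := by
      rw [hZdef, Finset.mem_filter] at hqZ; exact hqZ.2
    set lq : Finset Line := univ.filter (fun L => mem q L) with hlqdef
    have hlq5 : lq.card = 5 := hpoint q
    set Sq : Finset Line := lq.filter (fun L => ¬ (univ.filter fun p => K p = 2 ∧ mem p L).card = 0) with hSqdef
    set Nq : Finset Line := lq.filter (fun L => (univ.filter fun p => K p = 2 ∧ mem p L).card = 0) with hNqdef
    have hNS : Nq.card + Sq.card = 5 := by
      rw [hNqdef, hSqdef, Finset.card_filter_add_card_filter_not, hlq5]
    -- N0.filter (mem q) = Nq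
    have hNN : N0.filter (fun L => mem q L) = Nq := by
      rw [hN0def, hNqdef, hlqdef, Finset.filter_filter, Finset.filter_filter]
      exact Finset.filter_congr fun L _ => by tauto
    rw [hNN]
    -- sum of doubles over lines through q
    have hSd : ∑ L ∈ lq, (univ.filter fun p => K p = 2 ∧ mem p L).card = W.card := by
      rw [hlqdef, swapC mem _ (fun p => K p = 2)]
      rw [← hWdef]
      rw [Finset.card_eq_sum_ones W]
      refine Finset.sum_congr rfl fun p hpW => ?_
      have hp2 : K p = 2 := by rw [hWdef, Finset.mem_filter] at hpW; exact hpW.2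
      have hpq : q ≠ p := fun h => by rw [h] at hq; omega
      rw [Finset.filter_filter]
      exact card_filter_unique (hjoin q p hpq)
    -- sum of zeros over lines through q
    have hSz : ∑ L ∈ lq, (univ.filter fun p => K p = 0 ∧ mem p L).card = Z.card + 4 := by
      rw [hlqdef, swapC mem _ (fun p => K p = 0), ← hZdef]
      have herase : (Z.erase q).card + 1 = Z.card := Finset.card_erase_add_one hqZ
      rw [← Finset.add_sum_erase Z
        (fun p => ((univ.filter (fun L => mem q L)).filter (fun L => mem p L)).card) hqZ]
      calc ((univ.filter (fun L => mem q L)).filter (fun L => mem q L)).card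
            + ∑ p ∈ Z.erase q, ((univ.filter (fun L => mem q L)).filter (fun L => mem p L)).card
          = 5 + ∑ p ∈ Z.erase q, 1 := by
            congr 1
            · rw [Finset.filter_filter]
              simpa using hpoint q
            · refine Finset.sum_congr rfl fun p hp => ?_
              have hpq : q ≠ p := fun h => ((Finset.mem_erase.mp hp).1 h.symm)
              rw [Finset.filter_filter]
              exact card_filter_unique (hjoin q p hpq)
        _ = Z.card + 4 := by
            rw [Finset.sum_const, smul_eq_mul, mul_one]
            omega
    -- split sums over Sq / Nq
    have hsplitS : ∀ f : Line → ℕ, ∑ L ∈ lq, f L = ∑ L ∈ Nq, f L + ∑ L ∈ Sq, f L := by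
      intro f
      rw [hNqdef, hSqdef]
      exact (Finset.sum_filter_add_sum_filter_not lq _ f).symm
    have hNqd : ∑ L ∈ Nq, (univ.filter fun p => K p = 2 ∧ mem p L).card = 0 := by
      refine Finset.sum_eq_zero fun L hL => ?_
      rw [hNqdef, Finset.mem_filter] at hL
      exact hL.2
    have hSqd : ∑ L ∈ Sq, (univ.filter fun p => K p = 2 ∧ mem p L).card
        = ∑ L ∈ Sq, (univ.filter fun p => K p = 0 ∧ mem p L).card + Sq.card := by
      rw [Finset.card_eq_sum_ones Sq, ← Finset.sum_add_distrib]
      refine Finset.sum_congr rfl fun L hL => ?_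
      rw [hSqdef, Finset.mem_filter] at hL
      exact hdz L hL.2
    have hNqz : ∑ L ∈ Nq, (univ.filter fun p => K p = 0 ∧ mem p L).card ≤ 5 * Nq.card := by
      calc ∑ L ∈ Nq, (univ.filter fun p => K p = 0 ∧ mem p L).card
          ≤ ∑ _L ∈ Nq, 5 := by
            refine Finset.sum_le_sum fun L _ => ?_
            calc (univ.filter fun p => K p = 0 ∧ mem p L).card
                ≤ (univ.filter fun p => mem p L).card := by
                  refine Finset.card_le_card fun x hx => ?_
                  rw [Finset.mem_filter] at hx ⊢
                  exact ⟨hx.1, hx.2.2⟩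
              _ = 5 := hline L
        _ = 5 * Nq.card := by rw [Finset.sum_const, smul_eq_mul, mul_comm]
    have e1 := hsplitS (fun L => (univ.filter fun p => K p = 2 ∧ mem p L).card)
    have e2 := hsplitS (fun L => (univ.filter fun p => K p = 0 ∧ mem p L).card)
    omega
  -- global counts
  have hG1 : ∑ L : Line, (univ.filter fun p => K p = 2 ∧ mem p L).card = 5 * W.card := by
    rw [swapC mem _ (fun p => K p = 2), ← hWdef]
    calc ∑ p ∈ W, (univ.filter (fun L => mem p L)).card = ∑ _p ∈ W, 5 :=
        Finset.sum_congr rfl fun p _ => hpoint p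
      _ = 5 * W.card := by rw [Finset.sum_const, smul_eq_mul, mul_comm]
  have hG2 : ∑ L : Line, (univ.filter fun p => K p = 0 ∧ mem p L).card = 5 * Z.card := by
    rw [swapC mem _ (fun p => K p = 0), ← hZdef]
    calc ∑ p ∈ Z, (univ.filter (fun L => mem p L)).card = ∑ _p ∈ Z, 5 :=
        Finset.sum_congr rfl fun p _ => hpoint p
      _ = 5 * Z.card := by rw [Finset.sum_const, smul_eq_mul, mul_comm]
  set F : Finset Line := univ.filter (fun L => ¬ (univ.filter fun p => K p = 2 ∧ mem p L).card = 0)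
    with hFdef
  have hFN : N0.card + F.card = 21 := by
    rw [hN0def, hFdef, Finset.card_filter_add_card_filter_not, Finset.card_univ, hcardL]
  have hsplitG : ∀ f : Line → ℕ, ∑ L : Line, f L = ∑ L ∈ N0, f L + ∑ L ∈ F, f L := by
    intro f
    rw [hN0def, hFdef]
    exact (Finset.sum_filter_add_sum_filter_not univ _ f).symm
  have hN0d : ∑ L ∈ N0, (univ.filter fun p => K p = 2 ∧ mem p L).card = 0 := by
    refine Finset.sum_eq_zero fun L hL => ?_
    rw [hN0def, Finset.mem_filter] at hL
    exact hL.2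
  have hFd : ∑ L ∈ F, (univ.filter fun p => K p = 2 ∧ mem p L).card
      = ∑ L ∈ F, (univ.filter fun p => K p = 0 ∧ mem p L).card + F.card := by
    rw [Finset.card_eq_sum_ones F, ← Finset.sum_add_distrib]
    refine Finset.sum_congr rfl fun L hL => ?_
    rw [hFdef, Finset.mem_filter] at hL
    exact hdz L hL.2
  have hZ0le : ∑ L ∈ N0, (univ.filter fun p => K p = 0 ∧ mem p L).card ≤ 5 * N0.card := by
    calc ∑ L ∈ N0, (univ.filter fun p => K p = 0 ∧ mem p L).card
        ≤ ∑ _L ∈ N0, 5 := by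
          refine Finset.sum_le_sum fun L _ => ?_
          calc (univ.filter fun p => K p = 0 ∧ mem p L).card
              ≤ (univ.filter fun p => mem p L).card := by
                refine Finset.card_le_card fun x hx => ?_
                rw [Finset.mem_filter] at hx ⊢
                exact ⟨hx.1, hx.2.2⟩
            _ = 5 := hline L
      _ = 5 * N0.card := by rw [Finset.sum_const, smul_eq_mul, mul_comm]
  have hZ0ge : 2 * Z.card ≤ ∑ L ∈ N0, (univ.filter fun p => K p = 0 ∧ mem p L).card := by
    rw [swapC mem N0 (fun p => K p = 0), ← hZdef]
    calc 2 * Z.card = ∑ _p ∈ Z, 2 := by rw [Finset.sum_const, smul_eq_mul, mul_comm]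
      _ ≤ ∑ p ∈ Z, (N0.filter (fun L => mem p L)).card :=
          Finset.sum_le_sum fun p hp => hperzero p hp
  have e1 := hsplitG (fun L => (univ.filter fun p => K p = 2 ∧ mem p L).card)
  have e2 := hsplitG (fun L => (univ.filter fun p => K p = 0 ∧ mem p L).card)
  omega
end
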